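/- arXiv:2301.13675 — 6 statements merged into one kernel-verified Lean document; each statement's English description precedes it below -/
import Mathlib

section
/- Let V be a valuation domain and let C ≤ B ≤ A be V-modules with pd A ≤ 1. Then: (a) if C is tight in B and B is tight in A, then C is tight in A; (b) if C and B are both tight in A, then C is tight in B; (c) if C and B are both tight in A, then B/C is tight in A/C; (d) if C is tight in A and B/C is tight in A/C, then B is tight in A. -/
universe u v

open Pointwise

def PdLeOne (V : Type u) [CommRing V] (M : Type v) [AddCommGroup M] [Module V M] : Prop :=
  ∃ (P : Type (max u v)) (_ : AddCommGroup P) (_ : Module V P) (f : P →ₗ[V] M),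
    Module.Projective V P ∧ Function.Surjective f ∧ Module.Projective V (LinearMap.ker f)

def Tight (V : Type u) [CommRing V] {M : Type v} [AddCommGroup M] [Module V M]
    (N : Submodule V M) : Prop :=
  PdLeOne V (M ⧸ N)

/-- `B` tight in `A`, for submodules `B ≤ A` of an ambient module. -/
def TightIn (V : Type u) [CommRing V] {M : Type v} [AddCommGroup M] [Module V M]
    (B A : Submodule V M) : Prop :=
  Tight V (Submodule.comap A.subtype B)

open LinearMap


variable {V : Type u} [CommRing V]

/-- Extension of projectives (with projective quotient) is projective. -/
theorem projective_of_surjective_ker {M N : Type*} [AddCommGroup M] [Module V M]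
    [AddCommGroup N] [Module V N] (π : M →ₗ[V] N) (hπ : Function.Surjective π)
    (hN : Module.Projective V N) (hK : Module.Projective V (LinearMap.ker π)) :
    Module.Projective V M := by
  obtain ⟨s, hs⟩ := Module.projective_lifting_property π LinearMap.id hπ
  have hex : Function.Exact (LinearMap.ker π).subtype π := π.exact_subtype_ker_map
  have e := (hex.splitSurjectiveEquiv (Submodule.injective_subtype _) ⟨s, hs⟩).1
  exact Module.Projective.of_equiv (R := V) (M := LinearMap.ker π × N) e.symm

/-- Kernel of a split surjection from a projective module is projective. -/
theorem projective_ker_of_split {M N : Type*} [AddCommGroup M] [Module V M]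
    [AddCommGroup N] [Module V N] (π : M →ₗ[V] N) (t : N →ₗ[V] M)
    (ht : π ∘ₗ t = LinearMap.id) (hM : Module.Projective V M) :
    Module.Projective V (LinearMap.ker π) := by
  have hmem : ∀ x : M, x - t (π x) ∈ LinearMap.ker π := by
    intro x
    simp only [LinearMap.mem_ker, map_sub]
    rw [← LinearMap.comp_apply, ht]
    simp
  refine Module.Projective.of_split (R := V) (M := M) (LinearMap.ker π).subtype
    (LinearMap.codRestrict (LinearMap.ker π) (LinearMap.id - t ∘ₗ π) hmem) ?_
  ext x
  obtain ⟨x, hx⟩ := x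
  simp [LinearMap.codRestrict_apply, LinearMap.mem_ker.mp hx]



theorem projective_ker_of_ker {P Q Z : Type*} [AddCommGroup P] [Module V P]
    [AddCommGroup Q] [Module V Q] [AddCommGroup Z] [Module V Z]
    (f : P →ₗ[V] Z) (g : Q →ₗ[V] Z) (hf : Function.Surjective f) (hg : Function.Surjective g)
    (hP : Module.Projective V P) (hQ : Module.Projective V Q)
    (hkg : Module.Projective V (LinearMap.ker g)) :
    Module.Projective V (LinearMap.ker f) := by
  -- the pullback
  set G : P × Q →ₗ[V] Z := f ∘ₗ LinearMap.fst V P Q - g ∘ₗ LinearMap.snd V P Q with hG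
  set W := LinearMap.ker G with hW
  have memW : ∀ x : P × Q, x ∈ W ↔ f x.1 = g x.2 := by
    intro x
    simp [hW, hG, sub_eq_zero]
  -- first projection
  set p1 : W →ₗ[V] P := LinearMap.fst V P Q ∘ₗ W.subtype with hp1
  have hp1surj : Function.Surjective p1 := by
    intro p
    obtain ⟨q, hq⟩ := hg (f p)
    exact ⟨⟨(p, q), (memW _).mpr hq.symm⟩, rfl⟩
  -- ker p1 is a retract of ker g
  have hkerp1 : Module.Projective V (LinearMap.ker p1) := by
    refine Module.Projective.of_split (R := V) (M := LinearMap.ker g)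
      (LinearMap.codRestrict (LinearMap.ker g)
        (LinearMap.snd V P Q ∘ₗ W.subtype ∘ₗ (LinearMap.ker p1).subtype) ?_)
      (LinearMap.codRestrict (LinearMap.ker p1)
        (LinearMap.codRestrict W (LinearMap.inr V P Q ∘ₗ (LinearMap.ker g).subtype) ?_) ?_) ?_
    · rintro ⟨⟨⟨p, q⟩, hpq⟩, hker⟩
      have h1 : p = 0 := hker
      have h2 := (memW _).mp hpq
      simp only [LinearMap.mem_ker]
      simp only [h1, map_zero] at h2
      simpa using h2.symm
    · rintro ⟨q, hq⟩
      rw [memW]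
      simpa using hq.symm
    · rintro ⟨q, hq⟩
      rfl
    · ext ⟨⟨⟨p, q⟩, hpq⟩, hker⟩ <;>
        have h1 : p = 0 := hker <;>
        simp [h1]
  have hWproj : Module.Projective V W := projective_of_surjective_ker p1 hp1surj hP hkerp1
  -- second projection splits since Q is projective
  set p2 : W →ₗ[V] Q := LinearMap.snd V P Q ∘ₗ W.subtype with hp2
  have hp2surj : Function.Surjective p2 := by
    intro q
    obtain ⟨p, hp⟩ := hf (g q)
    exact ⟨⟨(p, q), (memW _).mpr hp⟩, rfl⟩
  obtain ⟨t, ht⟩ := Module.projective_lifting_property p2 LinearMap.id hp2surj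
  have hkerp2 : Module.Projective V (LinearMap.ker p2) :=
    projective_ker_of_split p2 t ht hWproj
  -- ker f is a retract of ker p2
  refine Module.Projective.of_split (R := V) (M := LinearMap.ker p2)
    (LinearMap.codRestrict (LinearMap.ker p2)
      (LinearMap.codRestrict W (LinearMap.inl V P Q ∘ₗ (LinearMap.ker f).subtype) ?_) ?_)
    (LinearMap.codRestrict (LinearMap.ker f)
      (LinearMap.fst V P Q ∘ₗ W.subtype ∘ₗ (LinearMap.ker p2).subtype) ?_) ?_
  · rintro ⟨p, hp⟩
    rw [memW]
    simpa using hp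
  · rintro ⟨p, hp⟩
    rfl
  · rintro ⟨⟨⟨p, q⟩, hpq⟩, hker⟩
    have h2 : q = 0 := hker
    have h1 := (memW _).mp hpq
    simp only [h2, map_zero] at h1
    simpa using h1
  · ext ⟨p, hp⟩
    rfl

-- keep helper defs for this test

theorem PdLeOne.of_equiv {V : Type u} [CommRing V] {M N : Type v}
    [AddCommGroup M] [Module V M] [AddCommGroup N] [Module V N]
    (e : M ≃ₗ[V] N) (h : PdLeOne V M) : PdLeOne V N := by
  obtain ⟨P, _, _, f, h1, h2, h3⟩ := h
  refine ⟨P, _, _, e.toLinearMap ∘ₗ f, h1, e.surjective.comp h2, ?_⟩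
  have hker : LinearMap.ker (e.toLinearMap ∘ₗ f) = LinearMap.ker f := by
    rw [LinearMap.ker_comp, LinearEquiv.ker, Submodule.comap_bot]
  rw [hker]
  exact h3

theorem pd_ext {V : Type u} [CommRing V] {Y Z : Type v}
    [AddCommGroup Y] [Module V Y] [AddCommGroup Z] [Module V Z]
    (π : Y →ₗ[V] Z) (hπ : Function.Surjective π)
    (hX : PdLeOne V (LinearMap.ker π)) (hZ : PdLeOne V Z) : PdLeOne V Y := by
  obtain ⟨P, _, _, f, hPp, hfs, hkf⟩ := hX
  obtain ⟨Q, _, _, g, hQp, hgs, hkg⟩ := hZ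
  obtain ⟨h, hh⟩ := Module.projective_lifting_property π g hπ
  have hπh : ∀ q, π (h q) = g q := fun q => LinearMap.congr_fun hh q
  set F : P × Q →ₗ[V] Y :=
    (LinearMap.ker π).subtype ∘ₗ f ∘ₗ LinearMap.fst V P Q + h ∘ₗ LinearMap.snd V P Q with hF
  have hFapp : ∀ x : P × Q, F x = (f x.1 : Y) + h x.2 := fun x => rfl
  have hFsurj : Function.Surjective F := by
    intro y
    obtain ⟨q, hq⟩ := hgs (π y)
    have hmem : y - h q ∈ LinearMap.ker π := by
      simp [LinearMap.mem_ker, map_sub, hπh, hq]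
    obtain ⟨p, hp⟩ := hfs ⟨y - h q, hmem⟩
    refine ⟨(p, q), ?_⟩
    rw [hFapp, hp]
    simp
  have hmemκ : ∀ w : LinearMap.ker F, (w : P × Q).2 ∈ LinearMap.ker g := by
    rintro ⟨⟨p, q⟩, hpq⟩
    have h0 : (f p : Y) + h q = 0 := hpq
    have : π ((f p : Y) + h q) = 0 := by rw [h0]; simp
    simpa [hπh, (f p).2] using this
  set κ : LinearMap.ker F →ₗ[V] LinearMap.ker g :=
    LinearMap.codRestrict (LinearMap.ker g)
      (LinearMap.snd V P Q ∘ₗ (LinearMap.ker F).subtype) hmemκ with hκ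
  have hκsurj : Function.Surjective κ := by
    rintro ⟨q, hq⟩
    have hmem : -(h q) ∈ LinearMap.ker π := by
      rw [LinearMap.mem_ker, map_neg, hπh, LinearMap.mem_ker.mp hq, neg_zero]
    obtain ⟨p, hp⟩ := hfs ⟨-(h q), hmem⟩
    have hw : ((p, q) : P × Q) ∈ LinearMap.ker F := by
      have : F (p, q) = (f p : Y) + h q := hFapp _
      rw [LinearMap.mem_ker, this, hp]
      simp
    exact ⟨⟨(p, q), hw⟩, Subtype.ext rfl⟩
  have hkerκ : Module.Projective V (LinearMap.ker κ) := by
    refine Module.Projective.of_split (R := V) (M := LinearMap.ker f)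
      (LinearMap.codRestrict (LinearMap.ker f)
        (LinearMap.fst V P Q ∘ₗ (LinearMap.ker F).subtype ∘ₗ (LinearMap.ker κ).subtype) ?_)
      (LinearMap.codRestrict (LinearMap.ker κ)
        (LinearMap.codRestrict (LinearMap.ker F)
          (LinearMap.inl V P Q ∘ₗ (LinearMap.ker f).subtype) ?_) ?_) ?_
    · rintro ⟨⟨⟨p, q⟩, hpq⟩, hker⟩
      have h2 : q = 0 := congrArg Subtype.val hker
      have h0 : (f p : Y) + h q = 0 := hpq
      rw [h2, map_zero, add_zero] at h0
      simpa [LinearMap.mem_ker] using (Submodule.coe_eq_zero.mp h0)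
    · rintro ⟨p, hp⟩
      show F (p, 0) = 0
      rw [hFapp]
      simp [LinearMap.mem_ker.mp hp]
    · rintro ⟨p, hp⟩
      exact Subtype.ext rfl
    · ext ⟨⟨⟨p, q⟩, hpq⟩, hker⟩ <;>
        have h2 : q = 0 := congrArg Subtype.val hker <;>
        simp [h2]
  have hkerF : Module.Projective V (LinearMap.ker F) :=
    projective_of_surjective_ker κ hκsurj hkg hkerκ
  haveI := hPp; haveI := hQp
  exact ⟨P × Q, inferInstance, inferInstance, F, inferInstance, hFsurj, hkerF⟩

theorem pd_sub {V : Type u} [CommRing V] {Y Z : Type v}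
    [AddCommGroup Y] [Module V Y] [AddCommGroup Z] [Module V Z]
    (π : Y →ₗ[V] Z) (hπ : Function.Surjective π)
    (hY : PdLeOne V Y) (hZ : PdLeOne V Z) : PdLeOne V (LinearMap.ker π) := by
  obtain ⟨P, _, _, f, hPp, hfs, hkf⟩ := hY
  obtain ⟨Q, _, _, g, hQp, hgs, hkg⟩ := hZ
  set g' : P →ₗ[V] Z := π ∘ₗ f with hg'
  have hg's : Function.Surjective g' := hπ.comp hfs
  have hkerg' : Module.Projective V (LinearMap.ker g') :=
    projective_ker_of_ker g' g hg's hgs hPp hQp hkg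
  have hmemφ : ∀ p : LinearMap.ker g', f (p : P) ∈ LinearMap.ker π := by
    rintro ⟨p, hp⟩
    exact hp
  set φ : LinearMap.ker g' →ₗ[V] LinearMap.ker π :=
    LinearMap.codRestrict (LinearMap.ker π) (f ∘ₗ (LinearMap.ker g').subtype) hmemφ with hφ
  have hφs : Function.Surjective φ := by
    rintro ⟨y, hy⟩
    obtain ⟨p, hp⟩ := hfs y
    have hpmem : p ∈ LinearMap.ker g' := by
      rw [LinearMap.mem_ker, hg', LinearMap.comp_apply, hp]
      exact hy
    exact ⟨⟨p, hpmem⟩, Subtype.ext hp⟩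
  have hkerφ : Module.Projective V (LinearMap.ker φ) := by
    refine Module.Projective.of_split (R := V) (M := LinearMap.ker f)
      (LinearMap.codRestrict (LinearMap.ker f)
        ((LinearMap.ker g').subtype ∘ₗ (LinearMap.ker φ).subtype) ?_)
      (LinearMap.codRestrict (LinearMap.ker φ)
        (LinearMap.codRestrict (LinearMap.ker g') (LinearMap.ker f).subtype ?_) ?_) ?_
    · rintro ⟨⟨p, hp⟩, hker⟩
      exact congrArg Subtype.val hker
    · rintro ⟨p, hp⟩
      rw [LinearMap.mem_ker, hg', LinearMap.comp_apply]
      simp [LinearMap.mem_ker.mp hp]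
    · rintro ⟨p, hp⟩
      exact Subtype.ext (LinearMap.mem_ker.mp hp)
    · ext ⟨⟨p, hp⟩, hker⟩
      rfl
  exact ⟨LinearMap.ker g', inferInstance, inferInstance, φ, hkerg', hφs, hkerφ⟩

/-- basic rules for tight submodules over a valuation domain. -/
theorem statement0 (V : Type u) [CommRing V] [IsDomain V] [ValuationRing V]
    (A : Type v) [AddCommGroup A] [Module V A] (hA : PdLeOne V A)
    (C B : Submodule V A) (hCB : C ≤ B) :
    -- (a) if C is tight in B and B is tight in A, then C is tight in A
    (TightIn V C B → Tight V B → Tight V C) ∧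
    -- (b) if C and B are tight in A, then C is tight in B
    (Tight V C → Tight V B → TightIn V C B) ∧
    -- (c) if C and B are tight in A, then B/C is tight in A/C
    (Tight V C → Tight V B → Tight V (Submodule.map C.mkQ B)) ∧
    -- (d) if C is tight in A and B/C is tight in A/C, then B is tight in A
    (Tight V C → Tight V (Submodule.map C.mkQ B) → Tight V B) := by
  classical
  set π₀ : (A ⧸ C) →ₗ[V] (A ⧸ B) := Submodule.mapQ C B LinearMap.id (by simpa using hCB) with hπ₀
  have hπ₀s : Function.Surjective π₀ := by
    intro z
    obtain ⟨a, rfl⟩ := Submodule.mkQ_surjective B z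
    exact ⟨C.mkQ a, by simp [hπ₀, Submodule.mapQ_apply]⟩
  -- B ⧸ (C ∩ B) is isomorphic to ker π₀
  have hf0mem : ∀ b : B, C.mkQ (b : A) ∈ LinearMap.ker π₀ := by
    intro b
    rw [LinearMap.mem_ker, hπ₀]
    simp only [Submodule.mkQ_apply, Submodule.mapQ_apply, LinearMap.id_apply]
    exact (Submodule.Quotient.mk_eq_zero B).mpr b.2
  set f1 : B →ₗ[V] LinearMap.ker π₀ :=
    LinearMap.codRestrict (LinearMap.ker π₀) (C.mkQ ∘ₗ B.subtype) hf0mem with hf1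
  have hf1surj : Function.Surjective f1 := by
    rintro ⟨w, hw⟩
    obtain ⟨a, ha⟩ := Submodule.mkQ_surjective C w
    have haB : a ∈ B := by
      rw [LinearMap.mem_ker, ← ha, hπ₀] at hw
      simp only [Submodule.mkQ_apply, Submodule.mapQ_apply, LinearMap.id_apply] at hw
      exact (Submodule.Quotient.mk_eq_zero B).mp hw
    exact ⟨⟨a, haB⟩, Subtype.ext ha⟩
  have hker1 : LinearMap.ker f1 = Submodule.comap B.subtype C := by
    ext b
    rw [LinearMap.mem_ker, hf1]
    constructor
    · intro hb
      have : C.mkQ (b : A) = 0 := congrArg Subtype.val hb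
      exact (Submodule.Quotient.mk_eq_zero C).mp (by simpa using this)
    · intro hb
      refine Subtype.ext ?_
      show C.mkQ (b : A) = 0
      simpa using (Submodule.Quotient.mk_eq_zero C).mpr hb
  have e1 : (B ⧸ Submodule.comap B.subtype C) ≃ₗ[V] LinearMap.ker π₀ :=
    (Submodule.quotEquivOfEq _ _ hker1.symm).trans (f1.quotKerEquivOfSurjective hf1surj)
  have e2 : ((A ⧸ C) ⧸ Submodule.map C.mkQ B) ≃ₗ[V] (A ⧸ B) :=
    Submodule.quotientQuotientEquivQuotient C B hCB
  refine ⟨?_, ?_, ?_, ?_⟩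
  · intro h1 h2
    exact pd_ext π₀ hπ₀s (PdLeOne.of_equiv e1 h1) h2
  · intro h1 h2
    exact PdLeOne.of_equiv e1.symm (pd_sub π₀ hπ₀s h1 h2)
  · intro _ h2
    exact PdLeOne.of_equiv e2.symm h2
  · intro _ h2
    exact PdLeOne.of_equiv e2 h2
end

section
/- Let V be a valuation domain, M a V-module with pd M ≤ 1, and C a tight submodule of M. Then gen C ≤ gen M, i.e., the minimal cardinality of a generating set of C does not exceed the minimal cardinality of a generating set of M. -/
universe u v

open Pointwise

/-- the minimal cardinality of a generating set of an `V`-module `M`. -/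
noncomputable def gen (V : Type u) [Semiring V] (M : Type v) [AddCommMonoid M] [Module V M] :
    Cardinal.{v} :=
  ⨅ S : {S : Set M // Submodule.span V S = ⊤}, Cardinal.mk ↥S.1


theorem Module.Projective.prod' {R : Type*} [Semiring R] {M N : Type*}
    [AddCommMonoid M] [AddCommMonoid N] [Module R M] [Module R N]
    [hM : Module.Projective R M] [hN : Module.Projective R N] :
    Module.Projective R (M × N) := by
  obtain ⟨sM, hsM⟩ := Module.projective_def.mp hM
  obtain ⟨sN, hsN⟩ := Module.projective_def.mp hN
  let e : ((M ⊕ N) →₀ R) ≃ₗ[R] (M →₀ R) × (N →₀ R) := Finsupp.sumFinsuppLEquivProdFinsupp R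
  refine Module.Projective.of_split (M := (M ⊕ N) →₀ R)
    (e.symm.toLinearMap ∘ₗ (sM.prodMap sN))
    (((Finsupp.linearCombination R id).prodMap (Finsupp.linearCombination R id)) ∘ₗ e.toLinearMap) ?_
  apply LinearMap.ext
  rintro ⟨m, n⟩
  have h1 : ∀ (u : M →₀ R) (w : N →₀ R) h, Finsupp.comapDomain Sum.inl (u.sumElim w) h = u := by
    intro u w h; ext a; simp
  have h2 : ∀ (u : M →₀ R) (w : N →₀ R) h, Finsupp.comapDomain Sum.inr (u.sumElim w) h = w := by
    intro u w h; ext a; simp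
  simp [e, h1, h2, hsM m, hsN n]


section
variable {R : Type*} [Ring R]
  {F : Type*} [AddCommGroup F] [Module R F]
  {X : Type*} [AddCommGroup X] [Module R X]
  {P : Type*} [AddCommGroup P] [Module R P]

theorem ker_projective_of_schanuel [Module.Projective R F] [hP : Module.Projective R P]
    (h : F →ₗ[R] X) (hsurj : Function.Surjective h)
    (f : P →ₗ[R] X) (hfsurj : Function.Surjective f)
    (hker : Module.Projective R (LinearMap.ker f)) :
    Module.Projective R (LinearMap.ker h) := by
  classical
  set φ : F × P →ₗ[R] X := (h ∘ₗ LinearMap.fst R F P) - (f ∘ₗ LinearMap.snd R F P) with hφ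
  set Y : Submodule R (F × P) := LinearMap.ker φ with hY
  have memY : ∀ z : F × P, z ∈ Y ↔ h z.1 = f z.2 := by
    intro z
    simp only [hY, hφ, LinearMap.mem_ker, LinearMap.sub_apply, LinearMap.comp_apply,
      LinearMap.fst_apply, LinearMap.snd_apply, sub_eq_zero]
  set πF : Y →ₗ[R] F := (LinearMap.fst R F P) ∘ₗ Y.subtype with hπF
  set πP : Y →ₗ[R] P := (LinearMap.snd R F P) ∘ₗ Y.subtype with hπP
  have hπFsurj : Function.Surjective πF := by
    intro x
    obtain ⟨p, hp⟩ := hfsurj (h x)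
    exact ⟨⟨(x, p), (memY _).2 hp.symm⟩, rfl⟩
  have hπPsurj : Function.Surjective πP := by
    intro p
    obtain ⟨x, hx⟩ := hsurj (f p)
    exact ⟨⟨(x, p), (memY _).2 hx⟩, rfl⟩
  -- ker πF ≃ ker f
  have hj1a : ∀ k : LinearMap.ker f, ((LinearMap.inr R F P) ∘ₗ (LinearMap.ker f).subtype) k ∈ Y := by
    intro k
    refine (memY _).2 ?_
    have : f (k : P) = 0 := k.2
    simpa using this.symm
  have hj1b : ∀ k : LinearMap.ker f,
      LinearMap.codRestrict Y ((LinearMap.inr R F P) ∘ₗ (LinearMap.ker f).subtype) hj1a k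
        ∈ LinearMap.ker πF := fun k => LinearMap.mem_ker.mpr rfl
  have hj2 : ∀ y : LinearMap.ker πF,
      ((LinearMap.snd R F P) ∘ₗ Y.subtype ∘ₗ (LinearMap.ker πF).subtype) y ∈ LinearMap.ker f := by
    intro y
    have h1 : ((y : Y) : F × P).1 = 0 := y.2
    have h2 := (memY ((y : Y) : F × P)).1 (y : Y).2
    rw [h1, map_zero] at h2
    exact LinearMap.mem_ker.mpr h2.symm
  have eF : (LinearMap.ker f) ≃ₗ[R] (LinearMap.ker πF) := by
    refine LinearEquiv.ofLinear
      (LinearMap.codRestrict _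
        (LinearMap.codRestrict Y ((LinearMap.inr R F P) ∘ₗ (LinearMap.ker f).subtype) hj1a) hj1b)
      (LinearMap.codRestrict _
        ((LinearMap.snd R F P) ∘ₗ Y.subtype ∘ₗ (LinearMap.ker πF).subtype) hj2) ?_ ?_
    · apply LinearMap.ext
      rintro ⟨⟨⟨y1, y2⟩, hy⟩, hy2⟩
      have h1 : y1 = 0 := hy2
      refine Subtype.ext (Subtype.ext (Prod.ext ?_ rfl))
      exact h1.symm
    · apply LinearMap.ext
      rintro ⟨k, hk⟩
      exact Subtype.ext rfl
  haveI : Module.Projective R (LinearMap.ker πF) := Module.Projective.of_equiv eF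
  -- split πF, so Y ≃ ker πF × F, so Y is projective
  obtain ⟨σ, hσ⟩ := Module.projective_lifting_property πF LinearMap.id hπFsurj
  have hσ' : ∀ x, πF (σ x) = x := fun x => DFunLike.congr_fun hσ x
  have hr : ∀ y : Y, ((LinearMap.id : Y →ₗ[R] Y) - σ ∘ₗ πF) y ∈ LinearMap.ker πF := by
    intro y
    refine LinearMap.mem_ker.mpr ?_
    simp only [LinearMap.sub_apply, LinearMap.id_apply, LinearMap.comp_apply, map_sub, hσ',
      sub_self]
  have eY : Y ≃ₗ[R] (LinearMap.ker πF) × F := by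
    refine LinearEquiv.ofLinear
      (LinearMap.prod (LinearMap.codRestrict (LinearMap.ker πF) ((LinearMap.id : Y →ₗ[R] Y) - σ ∘ₗ πF) hr) πF)
      ((LinearMap.ker πF).subtype.coprod σ) ?_ ?_
    · apply LinearMap.ext
      rintro ⟨⟨k, hk⟩, x⟩
      have hk' : πF k = 0 := hk
      refine Prod.ext (Subtype.ext ?_) ?_
      · simp [hk', hσ']
      · simp [hk', hσ']
    · apply LinearMap.ext
      intro y
      simp
  haveI : Module.Projective R ((LinearMap.ker πF) × F) := Module.Projective.prod'
  haveI : Module.Projective R Y := Module.Projective.of_equiv eY.symm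
  -- split πP, so ker πP is a direct summand of Y, hence projective
  obtain ⟨τ, hτ⟩ := Module.projective_lifting_property πP LinearMap.id hπPsurj
  have hτ' : ∀ p, πP (τ p) = p := fun p => DFunLike.congr_fun hτ p
  have hr2 : ∀ y : Y, ((LinearMap.id : Y →ₗ[R] Y) - τ ∘ₗ πP) y ∈ LinearMap.ker πP := by
    intro y
    refine LinearMap.mem_ker.mpr ?_
    simp only [LinearMap.sub_apply, LinearMap.id_apply, LinearMap.comp_apply, map_sub, hτ',
      sub_self]
  haveI : Module.Projective R (LinearMap.ker πP) := by
    refine Module.Projective.of_split (LinearMap.ker πP).subtype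
      (LinearMap.codRestrict (LinearMap.ker πP) ((LinearMap.id : Y →ₗ[R] Y) - τ ∘ₗ πP) hr2) ?_
    apply LinearMap.ext
    rintro ⟨y, hy⟩
    have hy' : πP y = 0 := hy
    refine Subtype.ext ?_
    simp [hy']
  -- ker πP ≃ ker h
  have hk1 : ∀ y : LinearMap.ker πP,
      ((LinearMap.fst R F P) ∘ₗ Y.subtype ∘ₗ (LinearMap.ker πP).subtype) y ∈ LinearMap.ker h := by
    intro y
    have h1 : ((y : Y) : F × P).2 = 0 := y.2
    have h2 := (memY ((y : Y) : F × P)).1 (y : Y).2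
    rw [h1, map_zero] at h2
    exact LinearMap.mem_ker.mpr h2
  have hk2a : ∀ k : LinearMap.ker h, ((LinearMap.inl R F P) ∘ₗ (LinearMap.ker h).subtype) k ∈ Y := by
    intro k
    refine (memY _).2 ?_
    have : h (k : F) = 0 := k.2
    simpa using this
  have hk2b : ∀ k : LinearMap.ker h,
      LinearMap.codRestrict Y ((LinearMap.inl R F P) ∘ₗ (LinearMap.ker h).subtype) hk2a k
        ∈ LinearMap.ker πP := fun k => LinearMap.mem_ker.mpr rfl
  have eH : (LinearMap.ker πP) ≃ₗ[R] (LinearMap.ker h) := by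
    refine LinearEquiv.ofLinear
      (LinearMap.codRestrict _
        ((LinearMap.fst R F P) ∘ₗ Y.subtype ∘ₗ (LinearMap.ker πP).subtype) hk1)
      (LinearMap.codRestrict _
        (LinearMap.codRestrict Y ((LinearMap.inl R F P) ∘ₗ (LinearMap.ker h).subtype) hk2a) hk2b)
      ?_ ?_
    · apply LinearMap.ext
      rintro ⟨k, hk⟩
      exact Subtype.ext rfl
    · apply LinearMap.ext
      rintro ⟨⟨⟨y1, y2⟩, hy⟩, hy2⟩
      have h1 : y2 = 0 := hy2
      refine Subtype.ext (Subtype.ext (Prod.ext rfl ?_))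
      exact h1.symm
  exact Module.Projective.of_equiv eH

end



open Cardinal in
theorem projective_exists_small_span {V : Type u} [CommRing V] [IsDomain V]
    {P : Type v} [AddCommGroup P] [Module V P] (hP : Module.Projective V P) :
    ∃ T : Set P, Submodule.span V T = ⊤ ∧ #T ≤ Module.rank V P * ℵ₀ ∧
      (Module.rank V P < ℵ₀ → T.Finite) := by
  classical
  obtain ⟨s, hs⟩ := Module.projective_def.mp hP
  obtain ⟨I, (hI : LinearIndependent V (fun x => x : I → P)), hImax⟩ :=
    exists_maximal_linearIndepOn V (id : P → P)
  rw [Set.image_id] at hImax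
  refine ⟨⋃ b : I, ((s b).support : Set P), ?_, ?_, ?_⟩
  · -- spanning
    rw [Submodule.eq_top_iff']
    intro x
    set T : Set P := ⋃ b : I, ((s b).support : Set P) with hT
    -- find a ≠ 0 with a • x ∈ span I
    have key : ∃ a : V, a ≠ 0 ∧ a • x ∈ Submodule.span V I := by
      by_cases hx : x ∈ I
      · exact ⟨1, one_ne_zero, by simpa using Submodule.subset_span hx⟩
      · simpa using hImax x hx
    obtain ⟨a, ha, hax⟩ := key
    -- coefficients of s x vanish off T
    have hsupp : ((s x).support : Set P) ⊆ T := by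
      intro y hy
      by_contra hyT
      have hy0 : ∀ u ∈ (⇑s '' I), u y = 0 := by
        rintro u ⟨b, hb, rfl⟩
        by_contra hne
        exact hyT (Set.mem_iUnion.2 ⟨⟨b, hb⟩, Finsupp.mem_support_iff.2 hne⟩)
      have h1 : s (a • x) ∈ Submodule.span V (⇑s '' I) := by
        rw [Submodule.span_image]
        exact Submodule.mem_map_of_mem hax
      have h2 : Submodule.span V (⇑s '' I) ≤ LinearMap.ker (Finsupp.lapply y) := by
        rw [Submodule.span_le]
        intro u hu
        exact LinearMap.mem_ker.mpr (hy0 u hu)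
      have h3 : (s (a • x)) y = 0 := h2 h1
      rw [map_smul, Finsupp.smul_apply, smul_eq_mul] at h3
      have h4 : (s x) y = 0 := by
        rcases mul_eq_zero.mp h3 with h | h
        · exact absurd h ha
        · exact h
      exact (Finsupp.mem_support_iff.mp hy) h4
    -- x = Σ_{y ∈ supp(s x)} (s x y) • y ∈ span T
    have hx : x = (Finsupp.linearCombination V id) (s x) := (hs x).symm
    rw [hx, Finsupp.linearCombination_apply, Finsupp.sum]
    refine Submodule.sum_mem _ ?_
    intro y hy
    exact Submodule.smul_mem _ _ (Submodule.subset_span (hsupp hy))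
  · -- cardinality
    refine le_trans (Cardinal.mk_iUnion_le _) ?_
    have h1 : #I ≤ Module.rank V P := by
      have := hI.cardinal_le_rank'
      simpa using hI.cardinal_le_rank'
    have h2 : ⨆ b : I, #(((s b).support : Set P)) ≤ ℵ₀ := by
      refine ciSup_le' fun b => ?_
      exact le_of_lt (Cardinal.lt_aleph0_of_finite _)
    exact mul_le_mul' h1 h2
  · -- finiteness
    intro hrank
    have h1 : #I ≤ Module.rank V P := by simpa using hI.cardinal_le_rank'
    have hIfin : I.Finite := by
      rw [← Set.not_infinite]
      intro hinf
      exact absurd (lt_of_le_of_lt (h1.trans' (Cardinal.aleph0_le_mk_iff.mpr hinf.to_subtype))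
        hrank) (by simp)
    rw [show (⋃ b : I, ((s b).support : Set P)) = ⋃ b ∈ I, ((s b).support : Set P) from
      (Set.biUnion_eq_iUnion I (fun b _ => ((s b).support : Set P))).symm]
    exact Set.Finite.biUnion hIfin (fun b _ => (s b).support.finite_toSet)


theorem Finset.exists_dvd_all {α : Type*} {V : Type*} [CommRing V] [IsDomain V] [ValuationRing V]
    {t : Finset α} (ht : t.Nonempty) (f : α → V) : ∃ b ∈ t, ∀ a ∈ t, f b ∣ f a := by
  classical
  induction ht using Finset.Nonempty.cons_induction with
  | singleton a => exact ⟨a, by simp⟩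
  | cons a t hat htne ih =>
    obtain ⟨b, hb, hdvd⟩ := ih
    rcases ValuationRing.dvd_total (f b) (f a) with h | h
    · refine ⟨b, by simp [hb], fun c hc => ?_⟩
      rcases Finset.mem_cons.mp hc with rfl | hc
      · exact h
      · exact hdvd c hc
    · refine ⟨a, by simp, fun c hc => ?_⟩
      rcases Finset.mem_cons.mp hc with rfl | hc
      · exact dvd_rfl
      · exact h.trans (hdvd c hc)

theorem fg_span_le_of_span_fin {V : Type*} [CommRing V] [IsDomain V] [ValuationRing V]
    {M : Type*} [AddCommGroup M] [Module V M] :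
    ∀ (n : ℕ) (v : Fin n → M) (B : Submodule V M),
      B ≤ Submodule.span V (Set.range v) → B.FG →
      ∃ w : Fin n → M, (∀ i, w i ∈ B) ∧ B = Submodule.span V (Set.range w) := by
  classical
  intro n
  induction n with
  | zero =>
    intro v B hle _
    refine ⟨Fin.elim0, fun i => i.elim0, ?_⟩
    have h0 : Submodule.span V (Set.range v) = ⊥ := by
      rw [Set.range_eq_empty, Submodule.span_empty]
    have h1 : Submodule.span V (Set.range (Fin.elim0 : Fin 0 → M)) = ⊥ := by
      rw [Set.range_eq_empty, Submodule.span_empty]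
    rw [h1]
    exact le_bot_iff.mp (hle.trans_eq h0)
  | succ n ih =>
    intro v B hle hfg
    obtain ⟨t, ht⟩ := hfg
    rcases Finset.eq_empty_or_nonempty t with rfl | htne
    · refine ⟨fun _ => 0, fun _ => B.zero_mem, ?_⟩
      have hB : B = ⊥ := by rw [← ht]; simp
      rw [hB]
      apply le_antisymm bot_le
      rw [Submodule.span_le]
      rintro x ⟨i, rfl⟩
      simp
    · have hrep : ∀ b ∈ t, ∃ c : Fin (n + 1) → V, ∑ i, c i • v i = b := by
        intro b hb
        have hbB : b ∈ B := ht ▸ Submodule.subset_span hb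
        exact (Submodule.mem_span_range_iff_exists_fun V).mp (hle hbB)
      choose c hc using hrep
      obtain ⟨b₀, hb₀t, hdvd⟩ := Finset.exists_dvd_all htne
        (fun b => if hb : b ∈ t then c b hb 0 else 0)
      have hb₀B : b₀ ∈ B := ht ▸ Submodule.subset_span hb₀t
      have key : ∀ b (hb : b ∈ t), ∃ d : V,
          b - d • b₀ ∈ Submodule.span V (Set.range (v ∘ Fin.succ)) ∧ b - d • b₀ ∈ B := by
        intro b hb
        have hdb := hdvd b hb
        rw [dif_pos hb, dif_pos hb₀t] at hdb
        obtain ⟨d, hd⟩ := hdb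
        refine ⟨d, ?_, B.sub_mem (ht ▸ Submodule.subset_span hb) (B.smul_mem d hb₀B)⟩
        have e1 : b - d • b₀ = ∑ i : Fin n,
            (c b hb i.succ - d * c b₀ hb₀t i.succ) • v i.succ := by
          conv_lhs => rw [← hc b hb, ← hc b₀ hb₀t]
          rw [Finset.smul_sum]
          simp_rw [smul_smul, ← Finset.sum_sub_distrib, ← sub_smul]
          rw [Fin.sum_univ_succ]
          have h00 : c b hb 0 - d * c b₀ hb₀t 0 = 0 := by rw [hd]; ring
          rw [h00, zero_smul, zero_add]
        rw [e1]
        exact Submodule.sum_mem _ fun i _ =>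
          Submodule.smul_mem _ _ (Submodule.subset_span ⟨i, rfl⟩)
      choose d hd1 hd2 using key
      set T' : Finset M := t.attach.image (fun b => b.1 - d b.1 b.2 • b₀) with hT'
      set B' : Submodule V M := Submodule.span V (T' : Set M) with hB'
      have hB'le : B' ≤ Submodule.span V (Set.range (v ∘ Fin.succ)) := by
        rw [hB', Submodule.span_le]
        intro x hx
        simp only [hT', Finset.coe_image, Set.mem_image, Finset.mem_coe, Finset.mem_attach,
          true_and] at hx
        obtain ⟨b, _, rfl⟩ := hx
        exact hd1 b.1 b.2
      have hB'B : B' ≤ B := by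
        rw [hB', Submodule.span_le]
        intro x hx
        simp only [hT', Finset.coe_image, Set.mem_image, Finset.mem_coe, Finset.mem_attach,
          true_and] at hx
        obtain ⟨b, _, rfl⟩ := hx
        exact hd2 b.1 b.2
      obtain ⟨w', hw'B', hw'span⟩ := ih (v ∘ Fin.succ) B' hB'le ⟨T', rfl⟩
      refine ⟨Fin.cons b₀ w', ?_, ?_⟩
      · intro i
        refine Fin.cases ?_ ?_ i
        · simpa using hb₀B
        · intro j
          simpa using hB'B (hw'B' j)
      · apply le_antisymm
        · rw [← ht, Submodule.span_le]
          intro b hb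
          have hsplit : b = (b - d b hb • b₀) + d b hb • b₀ := by abel
          rw [hsplit]
          refine Submodule.add_mem _ ?_ (Submodule.smul_mem _ _ ?_)
          · have hmem : b - d b hb • b₀ ∈ B' := by
              rw [hB']
              refine Submodule.subset_span ?_
              simp only [hT', Finset.coe_image, Set.mem_image, Finset.mem_coe]
              exact ⟨⟨b, hb⟩, by simp, rfl⟩
            have : B' = Submodule.span V (Set.range w') := hw'span
            rw [this] at hmem
            refine Submodule.span_mono ?_ hmem
            rintro x ⟨j, rfl⟩
            exact ⟨j.succ, by simp⟩
          · exact Submodule.subset_span ⟨0, by simp⟩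
        · rw [Submodule.span_le]
          rintro x ⟨i, rfl⟩
          refine Fin.cases ?_ ?_ i
          · simpa using hb₀B
          · intro j
            simpa using hB'B (hw'B' j)


open Cardinal in
/-- a tight submodule needs no more generators than the module. -/
theorem statement2 (V : Type u) [CommRing V] [IsDomain V] [ValuationRing V]
    (M : Type v) [AddCommGroup M] [Module V M] (hM : PdLeOne V M)
    (C : Submodule V M) (hC : Tight V C) :
    gen V ↥C ≤ gen V M := by
  classical
  haveI hne : Nonempty {S : Set M // Submodule.span V S = ⊤} :=
    ⟨⟨Set.univ, Submodule.span_univ⟩⟩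
  refine le_ciInf ?_
  rintro ⟨S, hS⟩
  -- the free cover of M on the generating set S
  set g : (↥S →₀ V) →ₗ[V] M := Finsupp.linearCombination V (Subtype.val : ↥S → M) with hg
  have hgsurj : Function.Surjective g := by
    rw [← LinearMap.range_eq_top, hg, Finsupp.range_linearCombination, Subtype.range_coe, hS]
  obtain ⟨P, _, _, f, hPproj, hfsurj, hkerproj⟩ := hC
  haveI := hPproj
  have hqsurj : Function.Surjective (C.mkQ ∘ₗ g) := (Submodule.mkQ_surjective C).comp hgsurj
  have hF'proj : Module.Projective V (LinearMap.ker (C.mkQ ∘ₗ g)) :=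
    ker_projective_of_schanuel (C.mkQ ∘ₗ g) hqsurj f hfsurj hkerproj
  set F' : Submodule V (↥S →₀ V) := LinearMap.ker (C.mkQ ∘ₗ g) with hF'
  have hmem : ∀ x : (↥S →₀ V), x ∈ F' ↔ g x ∈ C := by
    intro x
    rw [hF', LinearMap.mem_ker, LinearMap.comp_apply, Submodule.mkQ_apply,
      Submodule.Quotient.mk_eq_zero]
  set g' : F' →ₗ[V] ↥C := g.restrict (fun x hx => (hmem x).1 hx) with hg'
  have hg'surj : Function.Surjective g' := by
    rintro ⟨cval, hcval⟩
    obtain ⟨x, hx⟩ := hgsurj cval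
    exact ⟨⟨x, (hmem x).2 (hx ▸ hcval)⟩, Subtype.ext hx⟩
  obtain ⟨T, hTspan, hTcard, hTfin⟩ := projective_exists_small_span (V := V) (P := ↥F') hF'proj
  have hrank : Module.rank V F' ≤ Cardinal.lift.{u} #↥S := by
    refine le_trans (Submodule.rank_le F') (le_of_eq ?_)
    exact rank_finsupp_self V ↥S
  by_cases hfin : #↥S < ℵ₀
  · -- S finite: C is finitely generated, use the valuation-ring bound
    have hrankfin : Module.rank V F' < ℵ₀ :=
      lt_of_le_of_lt hrank (Cardinal.lift_lt_aleph0.mpr hfin)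
    have hTf : T.Finite := hTfin hrankfin
    have hF'fg : F'.FG := by
      rw [← Submodule.fg_top F']
      exact Submodule.fg_def.mpr ⟨T, hTf, hTspan⟩
    have hF'comap : F' = Submodule.comap g C := by
      ext x
      rw [hmem, Submodule.mem_comap]
    have hCfg : C.FG := by
      have h1 : Submodule.map g (Submodule.comap g C) = C :=
        Submodule.map_comap_eq_of_surjective hgsurj C
      rw [← h1, ← hF'comap]
      exact Submodule.FG.map g hF'fg
    have hSfin : S.Finite := Cardinal.lt_aleph0_iff_set_finite.mp hfin
    haveI : Fintype ↥S := hSfin.fintype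
    set n : ℕ := Fintype.card ↥S with hn
    set e : ↥S ≃ Fin n := Fintype.equivFin ↥S with he
    set v : Fin n → M := Subtype.val ∘ e.symm with hv
    have hvrange : Set.range v = S := by
      rw [hv, Set.range_comp, Set.range_eq_univ.mpr e.symm.surjective, Set.image_univ,
        Subtype.range_coe]
    have hle : C ≤ Submodule.span V (Set.range v) := by
      rw [hvrange, hS]
      exact le_top
    obtain ⟨w, hwC, hwspan⟩ := fg_span_le_of_span_fin n v C hle hCfg
    set T2 : Set ↥C := Set.range (fun s : ↥S => (⟨w (e s), hwC (e s)⟩ : ↥C)) with hT2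
    have hT2span : Submodule.span V T2 = ⊤ := by
      apply Submodule.map_injective_of_injective C.injective_subtype
      rw [Submodule.map_span, Submodule.map_top, Submodule.range_subtype]
      have himg : C.subtype '' T2 = Set.range w := by
        rw [hT2, ← Set.range_comp]
        apply Set.eq_of_subset_of_subset
        · rintro x ⟨s, rfl⟩
          exact ⟨e s, rfl⟩
        · rintro x ⟨i, rfl⟩
          exact ⟨e.symm i, by simp⟩
      rw [himg, ← hwspan]
    have hbound : gen V ↥C ≤ #↥T2 :=
      ciInf_le' (fun S : {S : Set ↥C // Submodule.span V S = ⊤} => #↥S.1) ⟨T2, hT2span⟩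
    refine hbound.trans ?_
    rw [hT2]
    exact Cardinal.mk_range_le
  · -- S infinite
    push_neg at hfin
    set T2 : Set ↥C := g' '' T with hT2
    have hT2span : Submodule.span V T2 = ⊤ := by
      rw [hT2, Submodule.span_image, hTspan, Submodule.map_top, LinearMap.range_eq_top]
      exact hg'surj
    have hbound : gen V ↥C ≤ #↥T2 :=
      ciInf_le' (fun S : {S : Set ↥C // Submodule.span V S = ⊤} => #↥S.1) ⟨T2, hT2span⟩
    refine hbound.trans ?_
    -- cardinal bookkeeping
    have h1 : Cardinal.lift.{max u v} #↥T2 ≤ Cardinal.lift.{v} #↥T :=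
      Cardinal.mk_image_le_lift
    have h2 : #↥T ≤ Cardinal.lift.{u} #↥S := by
      refine hTcard.trans ?_
      have ha : ℵ₀ ≤ Cardinal.lift.{u} #↥S := Cardinal.aleph0_le_lift.mpr hfin
      calc Module.rank V F' * ℵ₀ ≤ Cardinal.lift.{u} #↥S * ℵ₀ := mul_le_mul_left hrank _
        _ = Cardinal.lift.{u} #↥S := Cardinal.mul_eq_left ha (ha.trans' le_rfl) aleph0_ne_zero
    have h3 : Cardinal.lift.{max u v} #↥T2 ≤ Cardinal.lift.{max u v} #↥S := by
      refine h1.trans ?_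
      have := Cardinal.lift_le.{v}.mpr h2
      rwa [Cardinal.lift_lift] at this
    exact Cardinal.lift_le.mp h3
end

section
/- Let V be a valuation domain and let 0 = M₀ ≤ M₁ ≤ ⋯ ≤ M_σ ≤ ⋯ (σ < τ) be a continuous well-ordered ascending chain of submodules of a V-module M with union M (continuity means M_ρ = ⋃_{σ<ρ} M_σ for every limit ordinal ρ < τ), such that pd M_σ ≤ 1 for every σ < τ and each M_σ is tight in its immediate successor M_{σ+1}. Then each M_σ is tight in every later member M_ρ of the chain (σ < ρ < τ) and tight in M, and pd M ≤ 1. -/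
universe u v
open DirectSum

open Pointwise

section Helpers

variable {V : Type u} [CommRing V]

theorem pdLeOne_congr {X Y : Type v} [AddCommGroup X] [Module V X]
    [AddCommGroup Y] [Module V Y] (e : X ≃ₗ[V] Y) (h : PdLeOne V X) : PdLeOne V Y := by
  obtain ⟨P, _, _, f, hP, hf, hker⟩ := h
  refine ⟨P, _, _, (e : X →ₗ[V] Y) ∘ₗ f, hP, e.surjective.comp hf, ?_⟩
  have hk : LinearMap.ker ((e : X →ₗ[V] Y) ∘ₗ f) = LinearMap.ker f := by
    rw [LinearMap.ker_comp, LinearMap.ker_eq_bot.2 e.injective, Submodule.comap_bot]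
  rw [hk]; exact hker

theorem pdLeOne_of_subsingleton {X : Type v} [AddCommGroup X] [Module V X]
    (hs : Subsingleton X) : PdLeOne V X := by
  refine ⟨ULift.{v} V, inferInstance, inferInstance, 0, ?_, fun x => ⟨0, Subsingleton.elim _ _⟩, ?_⟩
  · exact Module.Projective.of_equiv (ULift.moduleEquiv : ULift.{v} V ≃ₗ[V] V).symm
  · have hk : LinearMap.ker (0 : ULift.{v} V →ₗ[V] X) = ⊤ := LinearMap.ker_zero
    rw [hk]
    exact Module.Projective.of_equiv (Submodule.topEquiv (M := ULift.{v} V)).symm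

/-- If `φ : W → Z` is surjective and `S = comap φ T`, quotients are isomorphic. -/
noncomputable def quotEquivOfComap {W Z : Type*} [AddCommGroup W] [Module V W]
    [AddCommGroup Z] [Module V Z] (φ : W →ₗ[V] Z) (hφ : Function.Surjective φ)
    (S : Submodule V W) (T : Submodule V Z) (h : S = T.comap φ) :
    (W ⧸ S) ≃ₗ[V] Z ⧸ T :=
  (Submodule.quotEquivOfEq _ _ (by rw [h, LinearMap.ker_comp, Submodule.ker_mkQ])) ≪≫ₗ
    (T.mkQ ∘ₗ φ).quotKerEquivOfSurjective (T.mkQ_surjective.comp hφ)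

/-- transfer of relative quotients along a surjection with small kernel -/
noncomputable def quotMapEquiv {Y Z : Type*} [AddCommGroup Y] [Module V Y]
    [AddCommGroup Z] [Module V Z] (q : Y →ₗ[V] Z) (A B : Submodule V Y)
    (hAB : A ≤ B) (hker : LinearMap.ker q ≤ A) :
    (↥B ⧸ (A.comap B.subtype)) ≃ₗ[V]
      (↥(B.map q) ⧸ ((A.map q).comap (B.map q).subtype)) := by
  refine quotEquivOfComap
    (LinearMap.codRestrict (B.map q) (q ∘ₗ B.subtype) (fun x => ⟨x.1, x.2, rfl⟩)) ?_ _ _ ?_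
  · rintro ⟨z, y, hy, rfl⟩
    exact ⟨⟨y, hy⟩, Subtype.ext rfl⟩
  · ext x
    show (x : Y) ∈ A ↔ q (x : Y) ∈ A.map q
    constructor
    · exact fun hx => ⟨x, hx, rfl⟩
    · rintro ⟨a, ha, he⟩
      have hmem : (x : Y) - a ∈ LinearMap.ker q := by
        rw [LinearMap.mem_ker, map_sub, he, sub_self]
      have hx : (x : Y) = a + ((x : Y) - a) := by abel
      rw [hx]; exact A.add_mem ha (hker hmem)

/-- relative quotient inside a bigger submodule `D` agrees with the plain one. -/
noncomputable def quotComapEquiv {M : Type*} [AddCommGroup M] [Module V M]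
    (A B D : Submodule V M) (hBD : B ≤ D) :
    (↥(B.comap D.subtype) ⧸ ((A.comap D.subtype).comap (B.comap D.subtype).subtype)) ≃ₗ[V]
      (↥B ⧸ (A.comap B.subtype)) := by
  refine quotEquivOfComap
    (LinearMap.codRestrict B (D.subtype ∘ₗ (B.comap D.subtype).subtype) (fun x => x.2)) ?_ _ _ ?_
  · rintro ⟨b, hb⟩
    exact ⟨⟨⟨b, hBD hb⟩, hb⟩, rfl⟩
  · rfl

end Helpers
theorem coreAux {V : Type u} [CommRing V] {X : Type v} [AddCommGroup X] [Module V X]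
    (τ : Ordinal.{v}) (g : Ordinal.{v} → Submodule V X)
    (h0 : g 0 = ⊥)
    (hmono : ∀ σ ρ : Ordinal.{v}, σ ≤ ρ → ρ ≤ τ → g σ ≤ g ρ)
    (hcont : ∀ ρ : Ordinal.{v}, ρ ≤ τ → Order.IsSuccLimit ρ → g ρ = ⨆ σ, ⨆ _ : σ < ρ, g σ)
    (htop : g τ = ⊤)
    {ι : Type v} (ord : ι → Ordinal.{v}) (hord : ∀ i, ord i < τ)
    (hordinj : Function.Injective ord)
    (henum : ∀ σ, σ < τ → ∃ i, ord i = σ)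
    (Q : ι → Type (max u v)) [∀ i, AddCommGroup (Q i)] [∀ i, Module V (Q i)]
    (lam : ∀ i, Q i →ₗ[V] X) (L : ∀ i, Submodule V (Q i))
    (hQproj : ∀ i, Module.Projective V (Q i))
    (hLproj : ∀ i, Module.Projective V ↥(L i))
    (hA1 : ∀ i q, lam i q ∈ g (ord i + 1))
    (hA2 : ∀ i, ∀ x ∈ g (ord i + 1), ∃ q, x - lam i q ∈ g (ord i))
    (hA3 : ∀ i q, lam i q ∈ g (ord i) ↔ q ∈ L i) :
    PdLeOne V X := by
  classical
  haveI : ∀ i, Module.Projective V (Q i) := hQproj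
  haveI : ∀ i, Module.Projective V ↥(L i) := hLproj
  set Φ : (⨁ i, Q i) →ₗ[V] X := DirectSum.toModule V ι X lam with hΦdef
  -- the filtration of the direct sum
  set Fsub : Ordinal.{v} → Submodule V (⨁ i, Q i) := fun ρ =>
    { carrier := {y | ∀ i, ¬ ord i < ρ → y i = 0}
      add_mem' := fun {a b} ha hb i hi => by
        rw [DirectSum.add_apply, ha i hi, hb i hi, add_zero]
      zero_mem' := fun i _ => DirectSum.zero_apply _
      smul_mem' := fun c {a} ha i hi => by
        rw [DirectSum.smul_apply, ha i hi, smul_zero] } with hFsubdef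
  have hFsub_mem : ∀ {ρ : Ordinal.{v}} {y : ⨁ i, Q i},
      y ∈ Fsub ρ ↔ ∀ i, ¬ ord i < ρ → y i = 0 := Iff.rfl
  have hFsub_mono : ∀ {ρ ρ' : Ordinal.{v}}, ρ ≤ ρ' → Fsub ρ ≤ Fsub ρ' := by
    intro ρ ρ' h y hy i hi
    exact hy i fun hlt => hi (hlt.trans_le h)
  have hΦlof : ∀ (i : ι) (q : Q i), Φ (DirectSum.lof V ι Q i q) = lam i q := by
    intro i q; rw [hΦdef]; exact DirectSum.toModule_lof V i q
  have hrep : ∀ y : ⨁ i, Q i, Φ y = ∑ i ∈ y.support, lam i (y i) := by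
    intro y
    conv_lhs => rw [← DirectSum.sum_support_of y]
    rw [map_sum]
    exact Finset.sum_congr rfl fun i _ => by rw [← DirectSum.lof_eq_of V, hΦlof]
  -- S0 : image of the filtration lands in the chain
  have hΦ_mem : ∀ ρ, ρ ≤ τ → ∀ y ∈ Fsub ρ, Φ y ∈ g ρ := by
    intro ρ hρ y hy
    rw [hrep]
    refine Submodule.sum_mem _ fun i _ => ?_
    by_cases hi : ord i < ρ
    · exact hmono _ _ (by rw [Ordinal.add_one_eq_succ]; exact Order.succ_le_of_lt hi) hρ
        (hA1 i (y i))
    · rw [hy i hi, map_zero]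
      exact (g ρ).zero_mem
  -- S1 : surjectivity onto the chain, respecting supports
  have hS1 : ∀ ρ, ρ ≤ τ → ∀ x ∈ g ρ, ∃ y ∈ Fsub ρ, Φ y = x := by
    intro ρ
    induction ρ using Ordinal.induction with
    | _ ρ IH =>
      intro hρτ x hx
      rcases Ordinal.zero_or_succ_or_isSuccLimit ρ with h0' | ⟨β, rfl⟩ | hlim
      · subst h0'
        rw [h0, Submodule.mem_bot] at hx
        exact ⟨0, (Fsub 0).zero_mem, by rw [map_zero, hx]⟩
      · have hβτ : β < τ := lt_of_lt_of_le (Order.lt_succ β) hρτ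
        obtain ⟨i, rfl⟩ := henum β hβτ
        rw [← Ordinal.add_one_eq_succ] at hx
        obtain ⟨q, hq⟩ := hA2 i x hx
        obtain ⟨y', hy'mem, hy'⟩ := IH (ord i) (Order.lt_succ _) (hord i).le _ hq
        refine ⟨y' + DirectSum.lof V ι Q i q, ?_, ?_⟩
        · intro j hj
          have hj' : ¬ ord j < ord i := fun h => hj (h.trans (Order.lt_succ _))
          have hji : i ≠ j := by
            intro h; subst h; exact hj (Order.lt_succ _)
          rw [DirectSum.add_apply, hy'mem j hj', DirectSum.lof_eq_of,
            DirectSum.of_eq_of_ne _ _ _ (Ne.symm hji), add_zero]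
        · rw [map_add, hy', hΦlof, sub_add_cancel]
      · rw [hcont ρ hρτ hlim, iSup_subtype'] at hx
        haveI hne : Nonempty {σ // σ < ρ} := ⟨⟨0, hlim.pos⟩⟩
        have hdir : Directed (· ≤ ·) fun σ : {σ // σ < ρ} => g σ.1 := by
          intro a b
          rcases le_total a.1 b.1 with h | h
          · exact ⟨b, hmono _ _ h (le_of_lt (b.2.trans_le hρτ)), le_rfl⟩
          · exact ⟨a, le_rfl, hmono _ _ h (le_of_lt (a.2.trans_le hρτ))⟩
        obtain ⟨⟨σ, hσρ⟩, hxσ⟩ := (Submodule.mem_iSup_of_directed _ hdir).1 hx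
        obtain ⟨y, hymem, hyx⟩ := IH σ hσρ (le_of_lt (hσρ.trans_le hρτ)) x hxσ
        exact ⟨y, hFsub_mono hσρ.le hymem, hyx⟩
  -- linear sections of the filtration
  have hKmaps : ∀ i : ι, ∃ h : ↥(L i) →ₗ[V] ↥(Fsub (ord i)),
      ∀ l : ↥(L i), Φ ((h l : ⨁ i, Q i)) = lam i (l : Q i) := by
    intro i
    set φ : ↥(Fsub (ord i)) →ₗ[V] ↥(g (ord i)) :=
      LinearMap.codRestrict _ (Φ ∘ₗ (Fsub (ord i)).subtype)
        (fun y => hΦ_mem _ (hord i).le _ y.2) with hφdef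
    have hφ : Function.Surjective φ := by
      rintro ⟨x, hx⟩
      obtain ⟨y, hy, hyx⟩ := hS1 _ (hord i).le x hx
      exact ⟨⟨y, hy⟩, Subtype.ext hyx⟩
    obtain ⟨h, hh⟩ := Module.projective_lifting_property φ
      (LinearMap.codRestrict _ (lam i ∘ₗ (L i).subtype) fun l => (hA3 i l).2 l.2) hφ
    refine ⟨h, fun l => ?_⟩
    exact congrArg Subtype.val (LinearMap.ext_iff.1 hh l)
  choose hmap hmap_spec using hKmaps
  -- the sections of the kernel
  set s : ∀ i, ↥(L i) →ₗ[V] (⨁ i, Q i) := fun i =>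
    (DirectSum.lof V ι Q i ∘ₗ (L i).subtype) - ((Fsub (ord i)).subtype ∘ₗ hmap i)
    with hsdef
  have hs_apply : ∀ (i : ι) (l : ↥(L i)),
      s i l = DirectSum.lof V ι Q i (l : Q i) - (hmap i l : ⨁ i, Q i) := fun i l => rfl
  have hsK : ∀ (i : ι) (l : ↥(L i)), s i l ∈ LinearMap.ker Φ := by
    intro i l
    rw [LinearMap.mem_ker, hs_apply, map_sub, hΦlof, hmap_spec i l, sub_self]
  have hs_self : ∀ (i : ι) (l : ↥(L i)), (s i l : ⨁ i, Q i) i = (l : Q i) := by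
    intro i l
    rw [hs_apply, DirectSum.sub_apply, DirectSum.lof_eq_of, DirectSum.of_eq_same,
      (hmap i l).2 i (lt_irrefl _), sub_zero]
  have hs_upper : ∀ (i : ι) (l : ↥(L i)) (j : ι), ord i < ord j →
      (s i l : ⨁ i, Q i) j = 0 := by
    intro i l j hij
    have hne : i ≠ j := fun h => absurd (h ▸ hij) (lt_irrefl _)
    rw [hs_apply, DirectSum.sub_apply, DirectSum.lof_eq_of,
      DirectSum.of_eq_of_ne _ _ _ hne.symm, (hmap i l).2 j (lt_asymm hij), sub_zero]
  -- the comparison map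
  set sK : ∀ i, ↥(L i) →ₗ[V] ↥(LinearMap.ker Φ) := fun i =>
    LinearMap.codRestrict _ (s i) (hsK i) with hsKdef
  set Ψ : (⨁ i, ↥(L i)) →ₗ[V] ↥(LinearMap.ker Φ) :=
    DirectSum.toModule V ι _ sK with hΨdef
  have hΨlof : ∀ (i : ι) (l : ↥(L i)),
      (Ψ (DirectSum.lof V ι (fun i => ↥(L i)) i l) : ⨁ i, Q i) = s i l := by
    intro i l
    rw [hΨdef, DirectSum.toModule_lof]
    rfl
  have hΨval : ∀ d : ⨁ i, ↥(L i),
      (Ψ d : ⨁ i, Q i) = ∑ i ∈ d.support, (s i (d i) : ⨁ i, Q i) := by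
    intro d
    conv_lhs => rw [← DirectSum.sum_support_of d]
    rw [map_sum, AddSubmonoidClass.coe_finset_sum]
    exact Finset.sum_congr rfl fun i _ => by
      rw [← DirectSum.lof_eq_of V, hΨlof]
  have hΨinj : Function.Injective Ψ := by
    rw [injective_iff_map_eq_zero]
    intro d hd
    by_contra hne
    have hsupp : d.support.Nonempty := by
      rw [Finset.nonempty_iff_ne_empty]
      exact fun h => hne (DFinsupp.support_eq_empty.1 h)
    obtain ⟨i₀, hi₀, hmax⟩ := d.support.exists_max_image ord hsupp
    have hval : (Ψ d : ⨁ i, Q i) i₀ = ((d i₀ : ↥(L i₀)) : Q i₀) := by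
      rw [hΨval, DFinsupp.finset_sum_apply]
      rw [Finset.sum_eq_single i₀]
      · exact hs_self i₀ (d i₀)
      · intro j hj hji
        exact hs_upper j (d j) i₀ (lt_of_le_of_ne (hmax j hj) fun h => hji (hordinj h))
      · intro h; exact absurd hi₀ h
    rw [hd] at hval
    have h1 : ((d i₀ : ↥(L i₀)) : Q i₀) = 0 := by
      rw [← hval]; rfl
    exact (DFinsupp.mem_support_iff.1 hi₀) (Subtype.ext h1)
  have hSurjAux : ∀ ρ, ρ ≤ τ → ∀ y : ⨁ i, Q i, Φ y = 0 → y ∈ Fsub ρ →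
      ∃ d, (Ψ d : ⨁ i, Q i) = y := by
    intro ρ
    induction ρ using Ordinal.induction with
    | _ ρ IH =>
      intro hρτ y hΦy hymem
      rcases Ordinal.zero_or_succ_or_isSuccLimit ρ with h0' | ⟨β, rfl⟩ | hlim
      · subst h0'
        have hy0 : y = 0 := DFinsupp.ext fun i => hymem i (zero_le (a := ord i)).not_gt
        exact ⟨0, by rw [map_zero, hy0]; rfl⟩
      · have hβτ : β < τ := lt_of_lt_of_le (Order.lt_succ β) hρτ
        obtain ⟨i, rfl⟩ := henum β hβτ
        have hy' : y - DirectSum.lof V ι Q i (y i) ∈ Fsub (ord i) := by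
          intro j hj
          rw [DirectSum.sub_apply]
          by_cases hji : i = j
          · subst hji
            rw [DirectSum.lof_eq_of, DirectSum.of_eq_same, sub_self]
          · have h1 : ¬ ord j < Order.succ (ord i) := by
              intro h
              rcases (Order.lt_succ_iff.1 h).lt_or_eq with h' | h'
              · exact hj h'
              · exact hji (hordinj h'.symm)
            rw [hymem j h1, DirectSum.lof_eq_of, DirectSum.of_eq_of_ne _ _ _ (Ne.symm hji), sub_zero]
        have hΦy' : Φ (y - DirectSum.lof V ι Q i (y i)) = -lam i (y i) := by
          rw [map_sub, hΦy, hΦlof, zero_sub]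
        have hlam : lam i (y i) ∈ g (ord i) := by
          have h2 := hΦ_mem (ord i) (hord i).le _ hy'
          rw [hΦy'] at h2
          exact neg_mem_iff.1 h2
        have hcL : y i ∈ L i := (hA3 i (y i)).1 hlam
        have hzker : Φ (y - s i ⟨y i, hcL⟩) = 0 := by
          rw [map_sub, hΦy, LinearMap.mem_ker.1 (hsK i ⟨y i, hcL⟩), sub_zero]
        have hzmem : y - s i ⟨y i, hcL⟩ ∈ Fsub (ord i) := by
          have hrw : y - s i ⟨y i, hcL⟩ =
              (y - DirectSum.lof V ι Q i (y i)) + (hmap i ⟨y i, hcL⟩ : ⨁ i, Q i) := by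
            rw [hs_apply]; abel
          rw [hrw]
          exact (Fsub (ord i)).add_mem hy' (hmap i ⟨y i, hcL⟩).2
        obtain ⟨d', hd'⟩ := IH (ord i) (Order.lt_succ _) (hord i).le _ hzker hzmem
        refine ⟨d' + DirectSum.lof V ι (fun i => ↥(L i)) i ⟨y i, hcL⟩, ?_⟩
        rw [map_add, Submodule.coe_add, hd', hΨlof, sub_add_cancel]
      · by_cases hy0 : y = 0
        · exact ⟨0, by rw [map_zero, hy0]; rfl⟩
        have hsupp : y.support.Nonempty := by
          rw [Finset.nonempty_iff_ne_empty]
          exact fun h => hy0 (DFinsupp.support_eq_empty.1 h)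
        set β := y.support.sup (fun i => ord i + 1) with hβdef
        have hβρ : β < ρ := by
          refine (Finset.sup_lt_iff hlim.pos).2 fun j hj => ?_
          have hjρ : ord j < ρ := by
            by_contra h
            exact (DFinsupp.mem_support_iff.1 hj) (hymem j h)
          rw [Ordinal.add_one_eq_succ]
          exact hlim.succ_lt hjρ
        have hymem' : y ∈ Fsub β := by
          intro j hj
          by_contra h
          have hmem : j ∈ y.support := DFinsupp.mem_support_iff.2 h
          have hle : ord j + 1 ≤ β := Finset.le_sup (f := fun i => ord i + 1) hmem
          have hlt : ord j < ord j + 1 := by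
            rw [Ordinal.add_one_eq_succ]; exact Order.lt_succ _
          exact hj (lt_of_lt_of_le hlt hle)
        exact IH β hβρ (le_of_lt (hβρ.trans_le hρτ)) y hΦy hymem'
  refine ⟨⨁ i, Q i, inferInstance, inferInstance, Φ, ?_, ?_, ?_⟩
  · show Module.Projective V (Π₀ i, Q i)
    infer_instance
  · intro x
    obtain ⟨y, _, hy⟩ := hS1 τ le_rfl x (htop ▸ Submodule.mem_top)
    exact ⟨y, hy⟩
  · have hΨsurj : Function.Surjective Ψ := by
      rintro ⟨y, hy⟩
      obtain ⟨d, hd⟩ := hSurjAux τ le_rfl y (LinearMap.mem_ker.1 hy)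
        (fun j hj => absurd (hord j) hj)
      exact ⟨d, Subtype.ext hd⟩
    haveI : Module.Projective V (⨁ i, ↥(L i)) := by
      show Module.Projective V (Π₀ i, ↥(L i)); infer_instance
    exact Module.Projective.of_equiv (LinearEquiv.ofBijective Ψ ⟨hΨinj, hΨsurj⟩)
theorem core {V : Type u} [CommRing V] {X : Type v} [AddCommGroup X] [Module V X]
    (τ : Ordinal.{v}) (g : Ordinal.{v} → Submodule V X)
    (h0 : g 0 = ⊥)
    (hmono : ∀ σ ρ : Ordinal.{v}, σ ≤ ρ → ρ ≤ τ → g σ ≤ g ρ)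
    (hcont : ∀ ρ : Ordinal.{v}, ρ ≤ τ → Order.IsSuccLimit ρ → g ρ = ⨆ σ, ⨆ _ : σ < ρ, g σ)
    (htop : g τ = ⊤)
    (hq : ∀ σ, σ < τ →
      PdLeOne V (↥(g (σ + 1)) ⧸ Submodule.comap (g (σ + 1)).subtype (g σ))) :
    PdLeOne V X := by
  classical
  set e := Ordinal.ToType.mk (o := τ) with hedef
  set ord : τ.ToType → Ordinal.{v} := fun i => (e.symm i : Ordinal.{v}) with horddef
  have hord : ∀ i, ord i < τ := fun i => (e.symm i).2
  have hordinj : Function.Injective ord := fun a b h => by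
    have := e.symm.injective (Subtype.ext h : e.symm a = e.symm b)
    exact this
  have henum : ∀ σ, σ < τ → ∃ i, ord i = σ := fun σ hσ =>
    ⟨e ⟨σ, hσ⟩, by rw [horddef]; simp⟩
  have hres : ∀ i : τ.ToType, ∃ (P : Type (max u v)) (_ : AddCommGroup P) (_ : Module V P)
      (f : P →ₗ[V] (↥(g (ord i + 1)) ⧸ Submodule.comap (g (ord i + 1)).subtype (g (ord i)))),
      Module.Projective V P ∧ Function.Surjective f ∧ Module.Projective V (LinearMap.ker f) :=
    fun i => hq (ord i) (hord i)
  choose Q iAC iM p hQproj hpsurj hkerproj using hres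
  letI : ∀ i, AddCommGroup (Q i) := iAC
  letI : ∀ i, Module V (Q i) := iM
  have hlift : ∀ i, ∃ μ : Q i →ₗ[V] ↥(g (ord i + 1)),
      (Submodule.comap (g (ord i + 1)).subtype (g (ord i))).mkQ ∘ₗ μ = p i := by
    intro i
    haveI := hQproj i
    exact Module.projective_lifting_property _ (p i) (Submodule.mkQ_surjective _)
  choose μ hμ using hlift
  set lam : ∀ i, Q i →ₗ[V] X := fun i => (g (ord i + 1)).subtype ∘ₗ μ i with hlamdef
  refine coreAux τ g h0 hmono hcont htop ord hord hordinj henum Q lam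
    (fun i => LinearMap.ker (p i)) hQproj hkerproj ?_ ?_ ?_
  · intro i q
    exact ((μ i) q).2
  · intro i x hx
    obtain ⟨q, hq'⟩ := hpsurj i ((Submodule.comap (g (ord i + 1)).subtype (g (ord i))).mkQ
      ⟨x, hx⟩)
    refine ⟨q, ?_⟩
    have hcf := LinearMap.congr_fun (hμ i) q
    rw [LinearMap.comp_apply] at hcf
    have h1 : (Submodule.comap (g (ord i + 1)).subtype (g (ord i))).mkQ (μ i q) =
        (Submodule.comap (g (ord i + 1)).subtype (g (ord i))).mkQ ⟨x, hx⟩ := by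
      rw [← hq', hcf]
    rw [Submodule.mkQ_apply, Submodule.mkQ_apply, Submodule.Quotient.eq] at h1
    have h2 := h1
    have : ((μ i q - ⟨x, hx⟩ : ↥(g (ord i + 1))) : X) ∈ g (ord i) := h2
    have hxval : x - lam i q = -((μ i q - ⟨x, hx⟩ : ↥(g (ord i + 1))) : X) := by
      simp [hlamdef]
    rw [hxval]
    exact (g (ord i)).neg_mem this
  · intro i q
    constructor
    · intro h
      have h1 : μ i q ∈ Submodule.comap (g (ord i + 1)).subtype (g (ord i)) := h
      have hcf := LinearMap.congr_fun (hμ i) q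
      rw [LinearMap.comp_apply] at hcf
      have h2 : (p i) q = 0 := by
        rw [← hcf]
        simpa [Submodule.Quotient.mk_eq_zero] using h1
      exact h2
    · intro h
      have hcf := LinearMap.congr_fun (hμ i) q
      rw [LinearMap.comp_apply] at hcf
      have h2 : (Submodule.comap (g (ord i + 1)).subtype (g (ord i))).mkQ (μ i q) = 0 := by
        rw [hcf]; exact h
      rw [Submodule.mkQ_apply, Submodule.Quotient.mk_eq_zero] at h2
      exact h2
theorem lemW {V : Type u} [CommRing V] {Y : Type v} [AddCommGroup Y] [Module V Y]
    (κ : Ordinal.{v}) (c : Ordinal.{v} → Submodule V Y)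
    (hmono : ∀ σ ρ : Ordinal.{v}, σ ≤ ρ → ρ ≤ κ → c σ ≤ c ρ)
    (hcont : ∀ ρ : Ordinal.{v}, ρ ≤ κ → Order.IsSuccLimit ρ → c ρ = ⨆ σ, ⨆ _ : σ < ρ, c σ)
    (htop : c κ = ⊤)
    (hq : ∀ π : Ordinal.{v}, π + 1 ≤ κ →
      PdLeOne V (↥(c (π + 1)) ⧸ Submodule.comap (c (π + 1)).subtype (c π)))
    (σ : Ordinal.{v}) (hσ : σ ≤ κ) :
    PdLeOne V (Y ⧸ c σ) := by
  have hadd : ∀ ρ : Ordinal.{v}, ρ ≤ κ - σ → σ + ρ ≤ κ := by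
    intro ρ hρ
    calc σ + ρ ≤ σ + (κ - σ) := add_le_add_right hρ σ
    _ = κ := Ordinal.add_sub_cancel_of_le hσ
  refine core (κ - σ) (fun π => (c (σ + π)).map (c σ).mkQ) ?_ ?_ ?_ ?_ ?_
  · show (c (σ + 0)).map (c σ).mkQ = ⊥
    rw [add_zero]
    exact eq_bot_iff.2 (Submodule.map_le_iff_le_comap.2
      (by rw [Submodule.comap_bot, Submodule.ker_mkQ]))
  · intro π π' h hπ'
    exact Submodule.map_mono (hmono _ _ (add_le_add_right h σ) (hadd _ hπ'))
  · intro ρ hρ hlim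
    have hσρκ : σ + ρ ≤ κ := hadd _ hρ
    have hlim' : Order.IsSuccLimit (σ + ρ) := Ordinal.isSuccLimit_add σ hlim
    have hE : c (σ + ρ) = ⨆ π, ⨆ _ : π < ρ, c (σ + π) := by
      rw [hcont _ hσρκ hlim']
      apply le_antisymm
      · refine iSup₂_le fun β hβ => ?_
        rcases le_or_gt β σ with h | h
        · refine le_iSup₂_of_le 0 hlim.pos ?_
          rw [add_zero]
          exact hmono _ _ h hσ
        · refine le_iSup₂_of_le (β - σ) (Ordinal.sub_lt_of_lt_add hβ hlim.pos) ?_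
          rw [Ordinal.add_sub_cancel_of_le h.le]
      · refine iSup₂_le fun π hπ => le_iSup₂_of_le (σ + π) ((add_lt_add_iff_left σ).2 hπ) le_rfl
    show (c (σ + ρ)).map (c σ).mkQ = ⨆ π, ⨆ _ : π < ρ, (c (σ + π)).map (c σ).mkQ
    rw [hE, Submodule.map_iSup]
    exact iSup_congr fun π => Submodule.map_iSup _ _
  · show (c (σ + (κ - σ))).map (c σ).mkQ = ⊤
    rw [Ordinal.add_sub_cancel_of_le hσ, htop, Submodule.map_top, Submodule.range_mkQ]
  · intro π hπ
    have h1 : σ + π + 1 ≤ κ := by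
      rw [add_assoc]
      refine hadd _ ?_
      rw [Ordinal.add_one_eq_succ]
      exact Order.succ_le_of_lt hπ
    have h2 : σ + π ≤ κ := le_trans (le_self_add) h1
    have hAB : c (σ + π) ≤ c (σ + π + 1) := hmono _ _ (le_self_add) h1
    have hker : LinearMap.ker (c σ).mkQ ≤ c (σ + π) := by
      rw [Submodule.ker_mkQ]
      exact hmono _ _ (le_self_add) h2
    have e := quotMapEquiv ((c σ).mkQ) (c (σ + π)) (c (σ + π + 1)) hAB hker
    have hpd := pdLeOne_congr e (hq (σ + π) h1)
    show PdLeOne V (↥((c (σ + (π + 1))).map (c σ).mkQ) ⧸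
      Submodule.comap ((c (σ + (π + 1))).map (c σ).mkQ).subtype ((c (σ + π)).map (c σ).mkQ))
    rw [show σ + (π + 1) = σ + π + 1 from (add_assoc σ π 1).symm]
    exact hpd
/-- tightness along a continuous well-ordered ascending chain. -/
theorem statement3 (V : Type u) [CommRing V] [IsDomain V] [ValuationRing V]
    (M : Type v) [AddCommGroup M] [Module V M]
    (τ : Ordinal.{v}) (f : Ordinal.{v} → Submodule V M)
    (h0 : f 0 = ⊥)
    (hmono : ∀ σ ρ : Ordinal.{v}, σ ≤ ρ → ρ < τ → f σ ≤ f ρ)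
    (hcont : ∀ ρ : Ordinal.{v}, ρ < τ → Order.IsSuccLimit ρ →
      f ρ = ⨆ (σ : Ordinal.{v}) (_ : σ < ρ), f σ)
    (hunion : (⨆ (σ : Ordinal.{v}) (_ : σ < τ), f σ) = ⊤)
    (hpd : ∀ σ : Ordinal.{v}, σ < τ → PdLeOne V ↥(f σ))
    (hsucc : ∀ σ : Ordinal.{v}, σ + 1 < τ → TightIn V (f σ) (f (σ + 1))) :
    (∀ σ ρ : Ordinal.{v}, σ < ρ → ρ < τ → TightIn V (f σ) (f ρ)) ∧
    (∀ σ : Ordinal.{v}, σ < τ → Tight V (f σ)) ∧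
    PdLeOne V M := by
  classical
  -- if τ is a successor, the last chain member is everything
  have hsuccTop : ∀ β, τ = β + 1 → f β = ⊤ := by
    intro β hβ
    have hβτ : β < τ := by
      rw [hβ, Ordinal.add_one_eq_succ]; exact Order.lt_succ β
    refine le_antisymm le_top ?_
    rw [← hunion]
    refine iSup₂_le fun π hπ => hmono π β ?_ hβτ
    rw [hβ, Ordinal.add_one_eq_succ] at hπ
    exact Order.lt_succ_iff.1 hπ
  -- the extended chain
  set c : Ordinal.{v} → Submodule V M := fun π => if π < τ then f π else ⊤ with hcdef
  have hceq : ∀ β, β < τ → c β = f β := fun β h => if_pos h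
  have hbsup : ∀ ρ', ρ' ≤ τ →
      (⨆ β, ⨆ _ : β < ρ', c β) = ⨆ β, ⨆ _ : β < ρ', f β := by
    intro ρ' hρ'
    apply le_antisymm
    · refine iSup₂_le fun β hβ => ?_
      rw [hceq β (lt_of_lt_of_le hβ hρ')]
      exact le_iSup₂ (f := fun β (_ : β < ρ') => f β) β hβ
    · refine iSup₂_le fun β hβ => ?_
      rw [← hceq β (lt_of_lt_of_le hβ hρ')]
      exact le_iSup₂ (f := fun β _ => c β) β hβ
  have hcmono : ∀ σ ρ : Ordinal.{v}, σ ≤ ρ → ρ ≤ τ → c σ ≤ c ρ := by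
    intro σ ρ h hρ
    by_cases hρτ : ρ < τ
    · rw [hceq ρ hρτ, hceq σ (lt_of_le_of_lt h hρτ)]
      exact hmono σ ρ h hρτ
    · have : c ρ = ⊤ := if_neg hρτ
      rw [this]; exact le_top
  have hccont : ∀ ρ : Ordinal.{v}, ρ ≤ τ → Order.IsSuccLimit ρ →
      c ρ = ⨆ σ, ⨆ _ : σ < ρ, c σ := by
    intro ρ hρ hlim
    by_cases hρτ : ρ < τ
    · rw [hceq ρ hρτ, hcont ρ hρτ hlim, hbsup ρ hρ]
    · have hρeq : ρ = τ := le_antisymm hρ (not_lt.1 hρτ)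
      subst hρeq
      have hctop : c ρ = ⊤ := if_neg hρτ
      rw [hctop, hbsup ρ le_rfl, hunion]
  have hctop : c τ = ⊤ := if_neg (lt_irrefl τ)
  have hcq : ∀ π : Ordinal.{v}, π + 1 ≤ τ →
      PdLeOne V (↥(c (π + 1)) ⧸ Submodule.comap (c (π + 1)).subtype (c π)) := by
    intro π hπ
    rcases lt_or_eq_of_le hπ with h | h
    · have h1 : c (π + 1) = f (π + 1) := hceq _ h
      have h2 : c π = f π := hceq _ (lt_trans (by
        rw [Ordinal.add_one_eq_succ]; exact Order.lt_succ π) h)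
      rw [h1, h2]
      exact hsucc π h
    · have hπτ : π < τ := by
        rw [← h, Ordinal.add_one_eq_succ]; exact Order.lt_succ π
      have h1 : c (π + 1) = ⊤ := if_neg (by rw [h]; exact lt_irrefl τ)
      have h2 : c π = ⊤ := by rw [hceq π hπτ, hsuccTop π h.symm]
      rw [h1, h2]
      refine pdLeOne_of_subsingleton ?_
      rw [Submodule.comap_top]
      exact Submodule.Quotient.subsingleton_iff.2 rfl
  -- Part 2 : each chain member is tight in M
  have hgoal2 : ∀ σ : Ordinal.{v}, σ < τ → Tight V (f σ) := by
    intro σ hσ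
    have h := lemW τ c hcmono hccont hctop hcq σ hσ.le
    rw [hceq σ hσ] at h
    exact h
  refine ⟨?_, hgoal2, ?_⟩
  · -- Part 1 : tightness within the chain
    intro σ ρ hσρ hρτ
    show PdLeOne V (↥(f ρ) ⧸ Submodule.comap (f ρ).subtype (f σ))
    refine lemW ρ (fun π => Submodule.comap (f ρ).subtype (f π)) ?_ ?_ ?_ ?_ σ hσρ.le
    · intro a b hab hbρ
      exact Submodule.comap_mono (hmono a b hab (lt_of_le_of_lt hbρ hρτ))
    · intro π hπρ hlim
      have hπτ : π < τ := lt_of_le_of_lt hπρ hρτ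
      show Submodule.comap (f ρ).subtype (f π) = _
      rw [hcont π hπτ hlim]
      apply le_antisymm
      · intro x hx
        have hx' : (x : M) ∈ ⨆ β, ⨆ _ : β < π, f β := hx
        rw [iSup_subtype'] at hx'
        haveI : Nonempty {β // β < π} := ⟨⟨0, hlim.pos⟩⟩
        have hdir : Directed (· ≤ ·) fun β : {β // β < π} => f β.1 := by
          intro a b
          rcases le_total a.1 b.1 with hab | hab
          · exact ⟨b, hmono _ _ hab (b.2.trans hπτ), le_rfl⟩
          · exact ⟨a, le_rfl, hmono _ _ hab (a.2.trans hπτ)⟩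
        obtain ⟨⟨β, hβ⟩, hxβ⟩ := (Submodule.mem_iSup_of_directed _ hdir).1 hx'
        exact (le_iSup₂ (f := fun β (_ : β < π) => Submodule.comap (f ρ).subtype (f β)) β hβ)
          (show x ∈ Submodule.comap (f ρ).subtype (f β) from hxβ)
      · exact iSup₂_le fun β hβ =>
          Submodule.comap_mono (le_iSup₂ (f := fun σ (_ : σ < π) => f σ) β hβ)
    · exact Submodule.comap_subtype_self _
    · intro π hπ1ρ
      have hBD : f (π + 1) ≤ f ρ := hmono _ _ hπ1ρ hρτ
      have e := quotComapEquiv (f π) (f (π + 1)) (f ρ) hBD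
      exact pdLeOne_congr e.symm (hsucc π (lt_of_le_of_lt hπ1ρ hρτ))
  · -- Part 3 : pd M ≤ 1
    by_cases hτ : τ = 0
    · subst hτ
      have hbot : (⊤ : Submodule V M) = ⊥ := by
        rw [← hunion]
        refine le_antisymm ?_ bot_le
        exact iSup_le fun σ => iSup_le fun h => absurd h (zero_le (a := σ)).not_gt
      refine pdLeOne_of_subsingleton (subsingleton_of_forall_eq 0 fun x => ?_)
      have : x ∈ (⊥ : Submodule V M) := hbot ▸ Submodule.mem_top
      exact (Submodule.mem_bot V).1 this
    · have h0τ : 0 < τ := pos_iff_ne_zero.2 hτ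
      have h2 : PdLeOne V (M ⧸ f 0) := hgoal2 0 h0τ
      exact pdLeOne_congr (Submodule.quotEquivOfEqBot _ h0) h2
end

section
/- Let V be a valuation domain, F a free V-module, and H a submodule of F. Then pd(F/H) ≤ 1 if and only if H is a free V-module. In particular, the tight submodules of free V-modules are exactly the free submodules. -/
universe u v

open Pointwise

set_option linter.unusedSectionVars false
set_option maxHeartbeats 1000000

namespace S9

variable {V : Type u} [CommRing V] [IsDomain V] [ValuationRing V]
variable {ι : Type*}

/-- torsion-freeness of `ι →₀ V` -/
lemma smul_finsupp_eq_zero {c : V} (hc : c ≠ 0) {x : ι →₀ V} (h : c • x = 0) : x = 0 := by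
  ext i
  have : c * x i = 0 := by
    have := congrArg (fun z : ι →₀ V => z i) h
    simpa using this
  rcases mul_eq_zero.1 this with h' | h'
  · exact absurd h' hc
  · simpa using h'

lemma mem_range_iff_fixed {π : (ι →₀ V) →ₗ[V] (ι →₀ V)} (hπ : π ∘ₗ π = π) {x : ι →₀ V} :
    x ∈ LinearMap.range π ↔ π x = x := by
  constructor
  · rintro ⟨z, rfl⟩
    have := congrArg (fun f => f z) (congrArg DFunLike.coe hπ)
    simpa using this
  · intro h; exact ⟨x, h⟩

/-- in a valuation ring, a nonempty finset has a common divisor among its elements -/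
lemma exists_dvd_all (s : Finset V) (hs : s.Nonempty) : ∃ a ∈ s, ∀ b ∈ s, a ∣ b := by
  classical
  induction s using Finset.induction_on with
  | empty => exact absurd hs (by simp)
  | insert c t hx ih =>
    rcases t.eq_empty_or_nonempty with rfl | ht
    · exact ⟨c, by simp⟩
    · obtain ⟨a, ha, hall⟩ := ih ht
      rcases ValuationRing.dvd_total a c with h | h
      · exact ⟨a, Finset.mem_insert_of_mem ha, by
          intro b hb
          rcases Finset.mem_insert.1 hb with rfl | hb
          · exact h
          · exact hall b hb⟩
      · exact ⟨c, Finset.mem_insert_self _ _, by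
          intro b hb
          rcases Finset.mem_insert.1 hb with rfl | hb
          · exact dvd_rfl
          · exact h.trans (hall b hb)⟩

/-- Lemma A : splitting off a unimodular multiple from an element of a direct summand. -/
lemma split_off (π : (ι →₀ V) →ₗ[V] (ι →₀ V)) (hπ : π ∘ₗ π = π) {x : ι →₀ V}
    (hx : x ∈ LinearMap.range π) (hx0 : x ≠ 0) :
    ∃ (w : ι →₀ V) (i₀ : ι), w ∈ LinearMap.range π ∧ w i₀ = 1 ∧
      x ∈ Submodule.span V {w} := by
  classical
  -- choose a coefficient of minimal valuation
  have hsupp : (x.support.image x).Nonempty := by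
    rcases Finsupp.support_nonempty_iff.2 hx0 with ⟨i, hi⟩
    exact ⟨x i, Finset.mem_image_of_mem x (by simpa using hi)⟩
  obtain ⟨c, hcmem, hcall⟩ := exists_dvd_all _ hsupp
  obtain ⟨i₀, hi₀, hci₀⟩ := Finset.mem_image.1 hcmem
  have hc0 : c ≠ 0 := by
    subst hci₀; exact Finsupp.mem_support_iff.1 hi₀
  have hdvd : ∀ i, c ∣ x i := by
    intro i
    by_cases hi : i ∈ x.support
    · exact hcall _ (Finset.mem_image_of_mem x hi)
    · simp [Finsupp.notMem_support_iff.1 hi]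
  -- construct w with x = c • w
  classical
  let u : ι → V := fun i => (hdvd i).choose
  have hu : ∀ i, x i = c * u i := fun i => (hdvd i).choose_spec
  have hu0 : ∀ i, u i ≠ 0 → i ∈ x.support := by
    intro i hui
    by_contra hi
    have : x i = 0 := Finsupp.notMem_support_iff.1 hi
    have : c * u i = 0 := by rw [← hu i]; exact this
    rcases mul_eq_zero.1 this with h | h
    · exact hc0 h
    · exact hui h
  let w : ι →₀ V := Finsupp.onFinset x.support u hu0
  have hcw : c • w = x := by
    ext i
    simp [w, Finsupp.onFinset_apply, ← hu i]
  have hwi₀ : w i₀ = 1 := by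
    have : c * w i₀ = c * 1 := by
      have : (c • w) i₀ = x i₀ := by rw [hcw]
      simpa [hci₀, mul_one] using this
    exact mul_left_cancel₀ hc0 this
  refine ⟨w, i₀, ?_, hwi₀, ?_⟩
  · -- purity : w ∈ range π
    rw [mem_range_iff_fixed hπ]
    have hxfix : π x = x := (mem_range_iff_fixed hπ).1 hx
    have : c • (w - π w) = 0 := by
      rw [smul_sub, hcw, ← map_smul, hcw, hxfix, sub_self]
    have := smul_finsupp_eq_zero hc0 this
    have := sub_eq_zero.1 this
    exact this.symm
  · exact Submodule.mem_span_singleton.2 ⟨c, hcw⟩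


/-- replacement idempotent after splitting off `w` with `w i₀ = 1`. -/
noncomputable def nextRho (ρ : (ι →₀ V) →ₗ[V] (ι →₀ V)) (w : ι →₀ V) (i₀ : ι) :
    (ι →₀ V) →ₗ[V] (ι →₀ V) :=
  ρ - (((Finsupp.lapply i₀).comp ρ).smulRight w)

lemma nextRho_apply (ρ : (ι →₀ V) →ₗ[V] (ι →₀ V)) (w : ι →₀ V) (i₀ : ι) (z : ι →₀ V) :
    nextRho ρ w i₀ z = ρ z - (ρ z) i₀ • w := rfl

variable {ρ : (ι →₀ V) →ₗ[V] (ι →₀ V)} {w : ι →₀ V} {i₀ : ι}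

lemma nextRho_w (hw : ρ w = w) (hwi : w i₀ = 1) : nextRho ρ w i₀ w = 0 := by
  rw [nextRho_apply, hw, hwi, one_smul, sub_self]

lemma nextRho_idem (hρ : ρ ∘ₗ ρ = ρ) (hw : ρ w = w) (hwi : w i₀ = 1) :
    (nextRho ρ w i₀) ∘ₗ (nextRho ρ w i₀) = nextRho ρ w i₀ := by
  apply LinearMap.ext; intro z
  have hρρ : ∀ y, ρ (ρ y) = ρ y := fun y => by
    have := congrArg (fun f => f y) (congrArg DFunLike.coe hρ); simpa using this
  simp only [LinearMap.comp_apply, nextRho_apply]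
  rw [map_sub, map_smul, hw, hρρ]
  rw [Finsupp.sub_apply, Finsupp.smul_apply, hwi, smul_eq_mul, mul_one, sub_self, zero_smul,
    sub_zero]

lemma nextRho_range (hρ : ρ ∘ₗ ρ = ρ) (hw : ρ w = w) (hwi : w i₀ = 1) :
    LinearMap.range (nextRho ρ w i₀) =
      LinearMap.range ρ ⊓ LinearMap.ker (Finsupp.lapply (M := V) (R := V) i₀) := by
  have hρρ : ∀ y, ρ (ρ y) = ρ y := fun y => by
    have := congrArg (fun f => f y) (congrArg DFunLike.coe hρ); simpa using this
  apply le_antisymm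
  · rintro _ ⟨z, rfl⟩
    constructor
    · refine ⟨ρ z - (ρ z) i₀ • w, ?_⟩
      rw [map_sub, map_smul, hρρ, hw, nextRho_apply]
    · show _ ∈ LinearMap.ker (Finsupp.lapply (M := V) (R := V) i₀)
      simp only [LinearMap.mem_ker, Finsupp.lapply_apply, nextRho_apply, Finsupp.sub_apply,
        Finsupp.smul_apply, hwi, smul_eq_mul, mul_one, sub_self]
  · rintro x ⟨⟨z, rfl⟩, hker⟩
    refine ⟨ρ z, ?_⟩
    have h0 : (ρ z) i₀ = 0 := by simpa using hker
    rw [nextRho_apply, hρρ, h0, zero_smul, sub_zero]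

/-- triangular families are linearly independent -/
lemma linearIndependent_of_triangular {κ : Type*} (v : κ → ι →₀ V) (e : κ → ι) (r : κ → ℕ)
    (hr : Function.Injective r) (hd : ∀ k, (v k) (e k) = 1)
    (ht : ∀ k m, r m < r k → (v k) (e m) = 0) : LinearIndependent V v := by
  classical
  rw [linearIndependent_iff']
  suffices H : ∀ s : Finset κ, ∀ gc : κ → V,
      (∑ i ∈ s, gc i • v i = 0) → ∀ i ∈ s, gc i = 0 by
    intro s gc h; exact H s gc h
  intro s
  induction s using Finset.strongInduction with
  | _ s IH =>
    intro gc hsum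
    rcases s.eq_empty_or_nonempty with rfl | hs
    · intro i hi; simp at hi
    · obtain ⟨k₀, hk₀s, hk₀min⟩ := s.exists_min_image r hs
      have hg0 : gc k₀ = 0 := by
        have happ := congrArg (fun z : ι →₀ V => z (e k₀)) hsum
        simp only [Finset.sum_apply'] at happ
        rw [Finset.sum_eq_single k₀] at happ
        · simpa [hd k₀] using happ
        · intro b hb hbne
          have hrb : r k₀ < r b := lt_of_le_of_ne (hk₀min b hb) (fun h => hbne (hr h.symm))
          simp [Finsupp.smul_apply, ht b k₀ hrb]
        · intro h; exact absurd hk₀s h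
      have hsum' : ∑ i ∈ s.erase k₀, gc i • v i = 0 := by
        rw [← Finset.add_sum_erase s _ hk₀s] at hsum
        rw [hg0, zero_smul, zero_add] at hsum
        exact hsum
      intro i hi
      by_cases hik : i = k₀
      · rw [hik]; exact hg0
      · exact IH (s.erase k₀) (Finset.erase_ssubset hk₀s) gc hsum' i
          (Finset.mem_erase.2 ⟨hik, hi⟩)


section K2

variable (ρ0 : (ι →₀ V) →ₗ[V] (ι →₀ V)) (g : ℕ → ι →₀ V)

open Classical in
/-- one step of the construction -/
noncomputable def stepFun (ρn : (ι →₀ V) →ₗ[V] (ι →₀ V)) (x : ι →₀ V) :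
    (((ι →₀ V) →ₗ[V] (ι →₀ V)) × Option ((ι →₀ V) × ι)) :=
  if h : ∃ p : (ι →₀ V) × ι, p.1 ∈ LinearMap.range ρn ∧ p.1 p.2 = 1 ∧
      x ∈ Submodule.span V {p.1} ∧ x ≠ 0 then
    (nextRho ρn h.choose.1 h.choose.2, some h.choose)
  else (ρn, none)

lemma stepFun_some {ρn : (ι →₀ V) →ₗ[V] (ι →₀ V)} {x : ι →₀ V} {p : (ι →₀ V) × ι}
    (h : (stepFun ρn x).2 = some p) :
    p.1 ∈ LinearMap.range ρn ∧ p.1 p.2 = 1 ∧ x ∈ Submodule.span V {p.1} ∧ x ≠ 0 ∧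
      (stepFun ρn x).1 = nextRho ρn p.1 p.2 := by
  classical
  unfold stepFun at h ⊢
  split_ifs at h ⊢ with hc
  obtain rfl : hc.choose = p := by simpa using h
  obtain ⟨a, b, c, d⟩ := hc.choose_spec
  exact ⟨a, b, c, d, rfl⟩

lemma stepFun_none {ρn : (ι →₀ V) →ₗ[V] (ι →₀ V)} {x : ι →₀ V}
    (h : (stepFun ρn x).2 = none) :
    (stepFun ρn x).1 = ρn ∧
      ¬∃ p : (ι →₀ V) × ι, p.1 ∈ LinearMap.range ρn ∧ p.1 p.2 = 1 ∧
        x ∈ Submodule.span V {p.1} ∧ x ≠ 0 := by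
  classical
  unfold stepFun at h ⊢
  split_ifs at h ⊢ with hc
  exact ⟨rfl, hc⟩

/-- the state sequence for the countably-generated case -/
noncomputable def seqSt : ℕ → (((ι →₀ V) →ₗ[V] (ι →₀ V)) × Option ((ι →₀ V) × ι))
  | 0 => (ρ0, none)
  | n + 1 => stepFun (seqSt n).1 ((seqSt n).1 (g n))

noncomputable def rhoN (n : ℕ) : (ι →₀ V) →ₗ[V] (ι →₀ V) := (seqSt ρ0 g n).1
noncomputable def pickN (n : ℕ) : Option ((ι →₀ V) × ι) := (seqSt ρ0 g (n + 1)).2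

lemma pickN_spec {n : ℕ} {p : (ι →₀ V) × ι} (h : pickN ρ0 g n = some p) :
    p.1 ∈ LinearMap.range (rhoN ρ0 g n) ∧ p.1 p.2 = 1 ∧
      rhoN ρ0 g n (g n) ∈ Submodule.span V {p.1} ∧ rhoN ρ0 g n (g n) ≠ 0 ∧
      rhoN ρ0 g (n + 1) = nextRho (rhoN ρ0 g n) p.1 p.2 := by
  have h' : (stepFun (rhoN ρ0 g n) ((rhoN ρ0 g n) (g n))).2 = some p := h
  obtain ⟨a, b, c, d, e⟩ := stepFun_some h'
  exact ⟨a, b, c, d, e⟩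

lemma pickN_none {n : ℕ} (h : pickN ρ0 g n = none) :
    rhoN ρ0 g (n + 1) = rhoN ρ0 g n ∧
      ¬∃ p : (ι →₀ V) × ι, p.1 ∈ LinearMap.range (rhoN ρ0 g n) ∧ p.1 p.2 = 1 ∧
        rhoN ρ0 g n (g n) ∈ Submodule.span V {p.1} ∧ rhoN ρ0 g n (g n) ≠ 0 := by
  have h' : (stepFun (rhoN ρ0 g n) ((rhoN ρ0 g n) (g n))).2 = none := h
  obtain ⟨a, b⟩ := stepFun_none h'
  exact ⟨a, b⟩

variable (hρ0 : ρ0 ∘ₗ ρ0 = ρ0)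
include hρ0

lemma rhoN_idem : ∀ n, (rhoN ρ0 g n) ∘ₗ (rhoN ρ0 g n) = rhoN ρ0 g n := by
  intro n
  induction n with
  | zero => exact hρ0
  | succ n ih =>
    cases hp : pickN ρ0 g n with
    | none => rw [(pickN_none ρ0 g hp).1]; exact ih
    | some p =>
      obtain ⟨hmem, hone, _, _, heq⟩ := pickN_spec ρ0 g hp
      rw [heq]
      exact nextRho_idem ih ((mem_range_iff_fixed ih).1 hmem) hone

lemma rhoN_range_succ_le (n : ℕ) :
    LinearMap.range (rhoN ρ0 g (n + 1)) ≤ LinearMap.range (rhoN ρ0 g n) := by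
  cases hp : pickN ρ0 g n with
  | none => rw [(pickN_none ρ0 g hp).1]
  | some p =>
    obtain ⟨hmem, hone, _, _, heq⟩ := pickN_spec ρ0 g hp
    rw [heq, nextRho_range (rhoN_idem ρ0 g hρ0 n)
      ((mem_range_iff_fixed (rhoN_idem ρ0 g hρ0 n)).1 hmem) hone]
    exact inf_le_left

lemma rhoN_range_mono {m n : ℕ} (h : m ≤ n) :
    LinearMap.range (rhoN ρ0 g n) ≤ LinearMap.range (rhoN ρ0 g m) := by
  induction n with
  | zero => cases Nat.le_zero.1 h; exact le_rfl
  | succ n ih =>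
    rcases Nat.lt_or_ge m (n+1) with h' | h'
    · exact (rhoN_range_succ_le ρ0 g hρ0 n).trans (ih (Nat.lt_succ_iff.1 h'))
    · cases le_antisymm h h'; exact le_rfl

lemma rhoN_ker {m : ℕ} {p : (ι →₀ V) × ι} (hp : pickN ρ0 g m = some p) {n : ℕ} (hmn : m < n) :
    LinearMap.range (rhoN ρ0 g n) ≤ LinearMap.ker (Finsupp.lapply (M := V) (R := V) p.2) := by
  obtain ⟨hmem, hone, _, _, heq⟩ := pickN_spec ρ0 g hp
  have h1 : LinearMap.range (rhoN ρ0 g (m + 1)) ≤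
      LinearMap.ker (Finsupp.lapply (M := V) (R := V) p.2) := by
    rw [heq, nextRho_range (rhoN_idem ρ0 g hρ0 m)
      ((mem_range_iff_fixed (rhoN_idem ρ0 g hρ0 m)).1 hmem) hone]
    exact inf_le_right
  exact (rhoN_range_mono ρ0 g hρ0 hmn).trans h1

/-- K2: the range of an idempotent endomorphism of a free module with countably many
generators is free, over a valuation domain. -/
theorem free_of_idem_countable (hg : LinearMap.range ρ0 = Submodule.span V (Set.range g)) :
    Module.Free V ↥(LinearMap.range ρ0) := by
  classical
  set κ := {n : ℕ // (pickN ρ0 g n).isSome} with hκ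
  set v : κ → ι →₀ V := fun k => ((pickN ρ0 g k.1).get k.2).1 with hv
  set e : κ → ι := fun k => ((pickN ρ0 g k.1).get k.2).2 with he
  have hsome : ∀ k : κ, pickN ρ0 g k.1 = some (v k, e k) := by
    intro k; rw [hv, he]; simp
  -- the partial w-sets
  let W : ℕ → Set (ι →₀ V) := fun n => v '' {k : κ | k.1 < n}
  have hWmono : ∀ {m n : ℕ}, m ≤ n → W m ⊆ W n := by
    intro m n h
    exact Set.image_mono (fun k hk => lt_of_lt_of_le hk h)
  -- P2 invariant
  have hP2 : ∀ n, ∀ z ∈ LinearMap.range ρ0, z - rhoN ρ0 g n z ∈ Submodule.span V (W n) := by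
    intro n
    induction n with
    | zero =>
      intro z hz
      have : rhoN ρ0 g 0 z = z := (mem_range_iff_fixed hρ0).1 hz
      rw [this, sub_self]
      exact Submodule.zero_mem _
    | succ n ih =>
      intro z hz
      cases hp : pickN ρ0 g n with
      | none =>
        rw [(pickN_none ρ0 g hp).1]
        exact Submodule.span_mono (hWmono (Nat.le_succ n)) (ih z hz)
      | some p =>
        obtain ⟨hmem, hone, _, _, heq⟩ := pickN_spec ρ0 g hp
        have hk : (pickN ρ0 g n).isSome := by rw [hp]; rfl
        have hvp : v ⟨n, hk⟩ = p.1 := by rw [hv]; simp [hp]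
        have hpW : p.1 ∈ W (n + 1) := ⟨⟨n, hk⟩, Nat.lt_succ_self n, hvp⟩
        have : z - rhoN ρ0 g (n+1) z
            = (z - rhoN ρ0 g n z) + ((rhoN ρ0 g n z) p.2) • p.1 := by
          rw [heq, nextRho_apply]; abel
        rw [this]
        exact Submodule.add_mem _
          (Submodule.span_mono (hWmono (Nat.le_succ n)) (ih z hz))
          (Submodule.smul_mem _ _ (Submodule.subset_span hpW))
  -- every generator is in the span of the w's
  have hWrange : ∀ n, W n ⊆ Set.range v := fun n => Set.image_subset_range v _
  have hgen : ∀ n, g n ∈ Submodule.span V (Set.range v) := by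
    intro n
    have hgmem : g n ∈ LinearMap.range ρ0 := by
      rw [hg]; exact Submodule.subset_span (Set.mem_range_self n)
    have h1 : g n - rhoN ρ0 g n (g n) ∈ Submodule.span V (Set.range v) :=
      Submodule.span_mono (hWrange n) (hP2 n (g n) hgmem)
    have h2 : rhoN ρ0 g n (g n) ∈ Submodule.span V (Set.range v) := by
      cases hp : pickN ρ0 g n with
      | some p =>
        obtain ⟨_, _, hspan, _, _⟩ := pickN_spec ρ0 g hp
        have hk : (pickN ρ0 g n).isSome := by rw [hp]; rfl
        have hvp : v ⟨n, hk⟩ = p.1 := by rw [hv]; simp [hp]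
        refine Submodule.span_le.2 ?_ hspan
        intro y hy
        rcases hy with rfl
        exact Submodule.subset_span ⟨⟨n, hk⟩, hvp⟩
      | none =>
        obtain ⟨_, hno⟩ := pickN_none ρ0 g hp
        by_cases h0 : rhoN ρ0 g n (g n) = 0
        · rw [h0]; exact Submodule.zero_mem _
        · exfalso
          obtain ⟨w, i₀, hwm, hwi, hws⟩ := split_off (rhoN ρ0 g n) (rhoN_idem ρ0 g hρ0 n)
            (LinearMap.mem_range_self _ (g n)) h0
          exact hno ⟨(w, i₀), hwm, hwi, hws, h0⟩
    have := Submodule.add_mem _ h1 h2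
    simpa using this
  -- range v lands in range ρ0
  have hvmem : ∀ k : κ, v k ∈ LinearMap.range ρ0 := by
    intro k
    have h1 := (pickN_spec ρ0 g (hsome k)).1
    exact rhoN_range_mono ρ0 g hρ0 (Nat.zero_le k.1) h1
  -- span equality
  have hspaneq : LinearMap.range ρ0 = Submodule.span V (Set.range v) := by
    apply le_antisymm
    · rw [hg]
      refine Submodule.span_le.2 ?_
      rintro _ ⟨n, rfl⟩
      exact hgen n
    · refine Submodule.span_le.2 ?_
      rintro _ ⟨k, rfl⟩
      exact hvmem k
  -- linear independence
  have hli : LinearIndependent V v := by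
    refine linearIndependent_of_triangular v e (fun k => k.1) ?_ ?_ ?_
    · intro a b h; exact Subtype.ext h
    · intro k
      exact (pickN_spec ρ0 g (hsome k)).2.1
    · intro k m hlt
      have h1 := (pickN_spec ρ0 g (hsome k)).1
      have h2 := rhoN_ker ρ0 g hρ0 (hsome m) hlt h1
      simpa using h2
  have hb : Module.Free V ↥(Submodule.span V (Set.range v)) :=
    Module.Free.of_basis (Module.Basis.span hli)
  exact Module.Free.of_equiv (LinearEquiv.ofEq _ _ hspaneq.symm)

end K2


section Closure

variable (π : (ι →₀ V) →ₗ[V] (ι →₀ V))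

/-- one closure step: add supports of images of basis vectors -/
def stepS (A : Set ι) : Set ι := A ∪ ⋃ k ∈ A, ↑(π (Finsupp.single k 1)).support

/-- closure of a set of coordinates under taking supports of `π` of basis vectors -/
def clS (A : Set ι) : Set ι := ⋃ n, (stepS π)^[n] A

lemma subset_stepS (A : Set ι) : A ⊆ stepS π A := Set.subset_union_left

lemma stepS_mono {A B : Set ι} (h : A ⊆ B) : stepS π A ⊆ stepS π B := by
  unfold stepS
  refine Set.union_subset_union h ?_
  exact Set.biUnion_subset_biUnion_left h

lemma iter_mono {A B : Set ι} (h : A ⊆ B) (n : ℕ) : (stepS π)^[n] A ⊆ (stepS π)^[n] B := by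
  induction n with
  | zero => simpa using h
  | succ n ih =>
    rw [Function.iterate_succ_apply', Function.iterate_succ_apply']
    exact stepS_mono π ih

lemma iter_succ_supset (A : Set ι) (n : ℕ) : (stepS π)^[n] A ⊆ (stepS π)^[n+1] A := by
  rw [Function.iterate_succ_apply']
  exact subset_stepS π _

lemma iter_le_iter (A : Set ι) {m n : ℕ} (h : m ≤ n) : (stepS π)^[m] A ⊆ (stepS π)^[n] A := by
  induction n with
  | zero => cases Nat.le_zero.1 h; exact le_rfl
  | succ n ih =>
    rcases Nat.lt_or_ge m (n+1) with h' | h'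
    · exact (ih (Nat.lt_succ_iff.1 h')).trans (iter_succ_supset π A n)
    · cases le_antisymm h h'; exact le_rfl

lemma subset_clS (A : Set ι) : A ⊆ clS π A := by
  intro x hx
  exact Set.mem_iUnion.2 ⟨0, by simpa using hx⟩

lemma clS_mono {A B : Set ι} (h : A ⊆ B) : clS π A ⊆ clS π B := by
  intro x hx
  rcases Set.mem_iUnion.1 hx with ⟨n, hn⟩
  exact Set.mem_iUnion.2 ⟨n, iter_mono π h n hn⟩

lemma stepS_clS (A : Set ι) : stepS π (clS π A) ⊆ clS π A := by
  intro x hx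
  rcases hx with hx | hx
  · exact hx
  · rcases Set.mem_iUnion.1 hx with ⟨k, hk⟩
    rcases Set.mem_iUnion.1 hk with ⟨hkA, hx⟩
    rcases Set.mem_iUnion.1 hkA with ⟨n, hn⟩
    refine Set.mem_iUnion.2 ⟨n + 1, ?_⟩
    rw [Function.iterate_succ_apply']
    right
    exact Set.mem_iUnion.2 ⟨k, Set.mem_iUnion.2 ⟨hn, hx⟩⟩

/-- a set is closed if the closure step keeps it fixed -/
def ClosedS (S : Set ι) : Prop := stepS π S ⊆ S

lemma clS_closedS (A : Set ι) : ClosedS π (clS π A) := stepS_clS π A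

lemma closedS_supp {S : Set ι} (hS : ClosedS π S) {k : ι} (hk : k ∈ S) :
    ↑(π (Finsupp.single k 1)).support ⊆ S := by
  intro x hx
  exact hS (Or.inr (Set.mem_iUnion.2 ⟨k, Set.mem_iUnion.2 ⟨hk, hx⟩⟩))

lemma stepS_union (A B : Set ι) : stepS π (A ∪ B) = stepS π A ∪ stepS π B := by
  unfold stepS
  rw [Set.biUnion_union]
  ext x; constructor
  · rintro (h | h)
    · rcases h with h | h
      · exact Or.inl (Or.inl h)
      · exact Or.inr (Or.inl h)
    · rcases h with h | h
      · exact Or.inl (Or.inr h)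
      · exact Or.inr (Or.inr h)
  · rintro (h | h)
    · rcases h with h | h
      · exact Or.inl (Or.inl h)
      · exact Or.inr (Or.inl h)
    · rcases h with h | h
      · exact Or.inl (Or.inr h)
      · exact Or.inr (Or.inr h)

lemma iter_union (A B : Set ι) (n : ℕ) :
    (stepS π)^[n] (A ∪ B) = (stepS π)^[n] A ∪ (stepS π)^[n] B := by
  induction n with
  | zero => simp
  | succ n ih =>
    rw [Function.iterate_succ_apply', Function.iterate_succ_apply',
      Function.iterate_succ_apply', ih, stepS_union]

lemma clS_union (A B : Set ι) : clS π (A ∪ B) = clS π A ∪ clS π B := by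
  ext x; constructor
  · intro hx
    rcases Set.mem_iUnion.1 hx with ⟨n, hn⟩
    rw [iter_union] at hn
    rcases hn with hn | hn
    · exact Or.inl (Set.mem_iUnion.2 ⟨n, hn⟩)
    · exact Or.inr (Set.mem_iUnion.2 ⟨n, hn⟩)
  · rintro (hx | hx)
    · exact clS_mono π Set.subset_union_left hx
    · exact clS_mono π Set.subset_union_right hx

lemma iter_finitary (A : Set ι) (n : ℕ) :
    ∀ x ∈ (stepS π)^[n] A, ∃ F : Finset ι, ↑F ⊆ A ∧ x ∈ (stepS π)^[n] (↑F : Set ι) := by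
  induction n with
  | zero =>
    intro x hx
    exact ⟨{x}, by simpa using hx, by simp⟩
  | succ n ih =>
    intro x hx
    rw [Function.iterate_succ_apply'] at hx
    rcases hx with hx | hx
    · obtain ⟨F, hF, hxF⟩ := ih x hx
      exact ⟨F, hF, (iter_succ_supset π _ n) hxF⟩
    · rcases Set.mem_iUnion.1 hx with ⟨k, hk⟩
      rcases Set.mem_iUnion.1 hk with ⟨hkmem, hx⟩
      obtain ⟨F, hF, hkF⟩ := ih k hkmem
      refine ⟨F, hF, ?_⟩
      rw [Function.iterate_succ_apply']
      right
      exact Set.mem_iUnion.2 ⟨k, Set.mem_iUnion.2 ⟨hkF, hx⟩⟩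

lemma clS_finitary (A : Set ι) :
    ∀ x ∈ clS π A, ∃ F : Finset ι, ↑F ⊆ A ∧ x ∈ clS π (↑F : Set ι) := by
  intro x hx
  rcases Set.mem_iUnion.1 hx with ⟨n, hn⟩
  obtain ⟨F, hF, hxF⟩ := iter_finitary π A n x hn
  exact ⟨F, hF, Set.mem_iUnion.2 ⟨n, hxF⟩⟩

lemma stepS_countable {A : Set ι} (hA : A.Countable) : (stepS π A).Countable := by
  refine Set.Countable.union hA ?_
  exact Set.Countable.biUnion hA (fun k _ => (π (Finsupp.single k 1)).support.countable_toSet)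

lemma clS_countable {A : Set ι} (hA : A.Countable) : (clS π A).Countable := by
  refine Set.countable_iUnion ?_
  intro n
  induction n with
  | zero => simpa using hA
  | succ n ih =>
    rw [Function.iterate_succ_apply']
    exact stepS_countable π ih

lemma clS_empty : clS π (∅ : Set ι) = ∅ := by
  apply Set.eq_empty_of_subset_empty
  intro x hx
  rcases Set.mem_iUnion.1 hx with ⟨n, hn⟩
  have hiter : ∀ m, (stepS π)^[m] (∅ : Set ι) = ∅ := by
    intro m
    induction m with
    | zero => simp
    | succ m ih =>
      rw [Function.iterate_succ_apply', ih]
      unfold stepS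
      simp
  rw [hiter n] at hn
  exact hn

lemma map_supported_le {S : Set ι} (hS : ClosedS π S) :
    Submodule.map π (Finsupp.supported V V S) ≤ Finsupp.supported V V S := by
  rw [Finsupp.supported_eq_span_single, Submodule.map_span, Submodule.span_le]
  rintro _ ⟨_, ⟨k, hk, rfl⟩, rfl⟩
  rw [SetLike.mem_coe, ← Finsupp.supported_eq_span_single, Finsupp.mem_supported]
  exact closedS_supp π hS hk

end Closure


section K1core

variable (π : (ι →₀ V) →ₗ[V] (ι →₀ V)) (S T : Set ι)

/-- the coordinate-truncation projection -/
noncomputable def PtoS : (ι →₀ V) →ₗ[V] (ι →₀ V) :=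
  haveI := Classical.decPred (· ∈ S)
  (Finsupp.supported V V S).subtype ∘ₗ Finsupp.restrictDom V V S

lemma PtoS_apply (z : ι →₀ V) :
    haveI := Classical.decPred (· ∈ S)
    PtoS (V := V) S z = z.filter (· ∈ S) := by
  classical
  simp [PtoS, Finsupp.restrictDom]

lemma PtoS_mem_supported (z : ι →₀ V) : PtoS (V := V) S z ∈ Finsupp.supported V V S := by
  classical
  rw [PtoS_apply, Finsupp.mem_supported]
  intro a ha
  simp only [Finsupp.support_filter, Finset.coe_filter, Set.mem_setOf_eq] at ha
  exact ha.2

lemma PtoS_of_supported {z : ι →₀ V} (hz : z ∈ Finsupp.supported V V S) :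
    PtoS (V := V) S z = z := by
  classical
  rw [PtoS_apply]
  ext a
  rw [Finsupp.filter_apply]
  split_ifs with h
  · rfl
  · exact ((Finsupp.mem_supported' V z).1 hz a h).symm

lemma PtoS_single_of_mem {k : ι} (hk : k ∈ S) :
    PtoS (V := V) S (Finsupp.single k 1) = Finsupp.single k 1 := by
  classical
  rw [PtoS_apply]
  exact Finsupp.filter_single_of_pos _ hk

lemma PtoS_single_of_not_mem {k : ι} (hk : k ∉ S) :
    PtoS (V := V) S (Finsupp.single k 1) = 0 := by
  classical
  rw [PtoS_apply]
  exact Finsupp.filter_single_of_neg _ hk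

/-- the idempotent carving out the new summand between stages `S ⊆ T` -/
noncomputable def rhoC : (ι →₀ V) →ₗ[V] (ι →₀ V) :=
  π ∘ₗ (LinearMap.id - PtoS (V := V) S) ∘ₗ π ∘ₗ PtoS (V := V) T

lemma rhoC_apply (z : ι →₀ V) :
    rhoC π S T z = π (π (PtoS (V := V) T z)) - π (PtoS (V := V) S (π (PtoS (V := V) T z))) := by
  simp [rhoC, map_sub]

variable {π S T}
variable (hπ : π ∘ₗ π = π) (hS : ClosedS π S) (hT : ClosedS π T) (hST : S ⊆ T)

include hπ in
lemma pi_pi (y : ι →₀ V) : π (π y) = π y := by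
  have := congrArg (fun f => f y) (congrArg DFunLike.coe hπ); simpa using this

include hπ hT in
lemma rhoC_apply_of_mem {x : ι →₀ V} (hx : x ∈ Submodule.map π (Finsupp.supported V V T)) :
    rhoC π S T x = x - π (PtoS (V := V) S x) := by
  obtain ⟨z, hz, rfl⟩ := hx
  have hmem : π z ∈ Finsupp.supported V V T := map_supported_le π hT ⟨z, hz, rfl⟩
  rw [rhoC_apply, PtoS_of_supported _ hmem]
  simp only [pi_pi hπ]

include hπ hT

include hS hST in
lemma rhoC_mem (z : ι →₀ V) :
    rhoC π S T z ∈ Submodule.map π (Finsupp.supported V V T) ∧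
      π (PtoS (V := V) S (rhoC π S T z)) = 0 := by
  classical
  set y := π (PtoS (V := V) T z) with hy
  have hyT : y ∈ Submodule.map π (Finsupp.supported V V T) :=
    ⟨PtoS (V := V) T z, PtoS_mem_supported T z, rfl⟩
  have hform : rhoC π S T z = y - π (PtoS (V := V) S y) := by
    rw [rhoC_apply, ← hy, pi_pi hπ]
  have hPSyS : π (PtoS (V := V) S y) ∈ Finsupp.supported V V S :=
    map_supported_le π hS ⟨PtoS (V := V) S y, PtoS_mem_supported S y, rfl⟩
  constructor
  · rw [hform]
    refine Submodule.sub_mem _ hyT ?_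
    exact Submodule.map_mono (Finsupp.supported_mono hST)
      ⟨PtoS (V := V) S y, PtoS_mem_supported S y, rfl⟩
  · rw [hform, map_sub, map_sub, PtoS_of_supported _ hPSyS, pi_pi hπ, sub_self]

include hS hST in
lemma disjoint_AS_C :
    Disjoint (Submodule.map π (Finsupp.supported V V S)) (LinearMap.range (rhoC π S T)) := by
  rw [Submodule.disjoint_def]
  rintro x hxS ⟨z, rfl⟩
  have h0 : π (PtoS (V := V) S (rhoC π S T z)) = 0 := (rhoC_mem hπ hS hT hST z).2
  have hxmem : rhoC π S T z ∈ Finsupp.supported V V S := map_supported_le π hS hxS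
  rw [PtoS_of_supported _ hxmem] at h0
  obtain ⟨u, _, hu⟩ := hxS
  have : π (rhoC π S T z) = rhoC π S T z := by rw [← hu, pi_pi hπ]
  rw [this] at h0
  exact h0

include hS hST in
lemma rhoC_fix {x : ι →₀ V} (hx : x ∈ LinearMap.range (rhoC π S T)) : rhoC π S T x = x := by
  obtain ⟨z, rfl⟩ := hx
  rw [rhoC_apply_of_mem hπ hT (rhoC_mem hπ hS hT hST z).1, (rhoC_mem hπ hS hT hST z).2,
    sub_zero]

include hS hST in
lemma rhoC_idem : (rhoC π S T) ∘ₗ (rhoC π S T) = rhoC π S T := by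
  apply LinearMap.ext; intro z
  exact rhoC_fix hπ hS hT hST ⟨z, rfl⟩

include hS hST in
lemma AT_le_AS_sup_C :
    Submodule.map π (Finsupp.supported V V T) ≤
      Submodule.map π (Finsupp.supported V V S) ⊔ LinearMap.range (rhoC π S T) := by
  intro x hx
  have hform := rhoC_apply_of_mem (S := S) hπ hT hx
  have : x = π (PtoS (V := V) S x) + rhoC π S T x := by rw [hform]; abel
  rw [this]
  exact Submodule.add_mem _
    (Submodule.mem_sup_left ⟨PtoS (V := V) S x, PtoS_mem_supported S x, rfl⟩)
    (Submodule.mem_sup_right ⟨x, rfl⟩)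

include hS hST in
lemma C_le_range : LinearMap.range (rhoC π S T) ≤ LinearMap.range π := by
  rintro _ ⟨z, rfl⟩
  rw [rhoC_apply]
  exact ⟨π (PtoS (V := V) T z) - PtoS (V := V) S (π (PtoS (V := V) T z)), by rw [map_sub]⟩

include hS hST in
lemma C_le_AT :
    LinearMap.range (rhoC π S T) ≤ Submodule.map π (Finsupp.supported V V T) := by
  rintro _ ⟨z, rfl⟩
  exact (rhoC_mem hπ hS hT hST z).1

include hS hST in
lemma C_eq_span :
    LinearMap.range (rhoC π S T) =
      Submodule.span V (rhoC π S T '' ((fun k => Finsupp.single k (1 : V)) '' (T \ S))) := by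
  classical
  apply le_antisymm
  · have htop : (⊤ : Submodule V (ι →₀ V)) =
        Submodule.span V ((fun k => Finsupp.single k (1 : V)) '' Set.univ) := by
      rw [← Finsupp.supported_eq_span_single, Finsupp.supported_univ]
    rw [LinearMap.range_eq_map, htop, Submodule.map_span, Submodule.span_le]
    rintro _ ⟨_, ⟨k, -, rfl⟩, rfl⟩
    by_cases hkT : k ∈ T
    · by_cases hkS : k ∈ S
      · -- rhoC of this single vanishes
        have h1 : PtoS (V := V) T (Finsupp.single k (1 : V)) = Finsupp.single k 1 :=
          PtoS_single_of_mem T (hST hkS)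
        have hsing : Finsupp.single k (1 : V) ∈ Finsupp.supported V V S := by
          rw [Finsupp.mem_supported]
          exact (Finset.coe_subset.2 Finsupp.support_single_subset).trans (by simpa using hkS)
        have h2 : π (Finsupp.single k (1 : V)) ∈ Finsupp.supported V V S :=
          map_supported_le π hS ⟨_, hsing, rfl⟩
        have : rhoC π S T (Finsupp.single k (1 : V)) = 0 := by
          rw [rhoC_apply, h1, PtoS_of_supported _ h2, pi_pi hπ, sub_self]
        rw [this]
        exact Submodule.zero_mem _
      · exact Submodule.subset_span ⟨_, ⟨k, ⟨hkT, hkS⟩, rfl⟩, rfl⟩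
    · have h1 : PtoS (V := V) T (Finsupp.single k (1 : V)) = 0 :=
        PtoS_single_of_not_mem T hkT
      have : rhoC π S T (Finsupp.single k (1 : V)) = 0 := by
        rw [rhoC_apply, h1]; simp
      rw [this]
      exact Submodule.zero_mem _
  · rw [Submodule.span_le]
    rintro _ ⟨u, -, rfl⟩
    exact ⟨u, rfl⟩

include hS hST in
lemma C_free (hc : (T \ S).Countable) : Module.Free V ↥(LinearMap.range (rhoC π S T)) := by
  classical
  set G : Set (ι →₀ V) := rhoC π S T '' ((fun k => Finsupp.single k (1 : V)) '' (T \ S)) with hG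
  have hGc : G.Countable := ((hc.image _).image _)
  have hG0 : (insert (0 : ι →₀ V) G).Countable := hGc.insert 0
  obtain ⟨g, hg⟩ := hG0.exists_eq_range ⟨0, Set.mem_insert 0 G⟩
  refine free_of_idem_countable _ g (rhoC_idem hπ hS hT hST) ?_
  rw [C_eq_span hπ hS hT hST, ← hg, Submodule.span_insert_zero]

end K1core


/-- Main theorem: the range of an idempotent endomorphism of a free module over a
valuation domain is free (Kaplansky's theorem). -/
theorem free_range_idem (π : (ι →₀ V) →ₗ[V] (ι →₀ V)) (hπ : π ∘ₗ π = π) :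
    Module.Free V ↥(LinearMap.range π) := by
  classical
  letI : LinearOrder ι := IsWellOrder.linearOrder WellOrderingRel
  haveI hwf : WellFoundedLT ι := IsWellOrder.toIsWellFounded (r := WellOrderingRel)
  set SS : ι → Set ι := fun i => clS π {j | j < i} with hSSdef
  set TT : ι → Set ι := fun i => clS π {j | j ≤ i} with hTTdef
  set CC : ι → Submodule V (ι →₀ V) := fun i => LinearMap.range (rhoC π (SS i) (TT i))
    with hCCdef
  set AA : Set ι → Submodule V (ι →₀ V) :=
    fun U => Submodule.map π (Finsupp.supported V V U) with hAAdef
  have hScl : ∀ i, ClosedS π (SS i) := fun i => clS_closedS π _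
  have hTcl : ∀ i, ClosedS π (TT i) := fun i => clS_closedS π _
  have hST : ∀ i, SS i ⊆ TT i := fun i => clS_mono π (fun j hj => show j ≤ i from le_of_lt hj)
  have hTmono : ∀ {i i' : ι}, i ≤ i' → TT i ⊆ TT i' :=
    fun {i i'} h => clS_mono π (fun j hj => show j ≤ i' from le_trans hj h)
  have hTS : ∀ {j i : ι}, j < i → TT j ⊆ SS i :=
    fun {j i} h => clS_mono π (fun k hk => show k < i from lt_of_le_of_lt hk h)
  have hAAmono : ∀ {U U' : Set ι}, U ⊆ U' → AA U ≤ AA U' :=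
    fun h => Submodule.map_mono (Finsupp.supported_mono h)
  have hcount : ∀ i, ((TT i) \ (SS i)).Countable := by
    intro i
    have h1 : TT i = SS i ∪ clS π {i} := by
      show clS π {j | j ≤ i} = clS π {j | j < i} ∪ clS π {i}
      have heq : {j | j ≤ i} = {j | j < i} ∪ {i} := by
        ext j
        simp only [Set.mem_setOf_eq, Set.mem_union, Set.mem_singleton_iff]
        exact le_iff_lt_or_eq
      rw [heq, clS_union]
    refine Set.Countable.mono ?_ (clS_countable π (Set.countable_singleton i))
    rw [h1]
    intro x hx
    rcases hx.1 with h | h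
    · exact absurd h hx.2
    · exact h
  have hCfree : ∀ i, Module.Free V ↥(CC i) :=
    fun i => C_free hπ (hScl i) (hTcl i) (hST i) (hcount i)
  have hCleR : ∀ i, CC i ≤ LinearMap.range π :=
    fun i => C_le_range hπ (hScl i) (hTcl i) (hST i)
  have hCleAT : ∀ i, CC i ≤ AA (TT i) :=
    fun i => C_le_AT hπ (hScl i) (hTcl i) (hST i)
  -- finitely many elements of SS i are inside TT j for some j < i
  have hmem1 : ∀ i, ∀ k ∈ SS i, ∃ j, j < i ∧ k ∈ TT j := by
    intro i k hk
    obtain ⟨F, hF, hkF⟩ := clS_finitary π _ k hk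
    rcases F.eq_empty_or_nonempty with rfl | hne
    · rw [show ((∅ : Finset ι) : Set ι) = (∅ : Set ι) by simp, clS_empty] at hkF
      exact absurd hkF (Set.notMem_empty k)
    · refine ⟨F.max' hne, hF (F.max'_mem hne), ?_⟩
      refine clS_mono π (fun a ha => ?_) hkF
      exact show a ≤ F.max' hne from F.le_max' a ha
  have hfin : ∀ i, ∀ F : Finset ι, F.Nonempty → ↑F ⊆ SS i → ∃ j, j < i ∧ ↑F ⊆ TT j := by
    intro i F hne hF
    let f : ι → ι := fun k => if h : ∃ j, j < i ∧ k ∈ TT j then h.choose else i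
    have hf : ∀ k ∈ SS i, f k < i ∧ k ∈ TT (f k) := by
      intro k hk
      have h := hmem1 i k hk
      simp only [f, dif_pos h]
      exact h.choose_spec
    obtain ⟨k₀, hk₀, hjeq⟩ := F.exists_mem_eq_sup' hne f
    refine ⟨F.sup' hne f, hjeq ▸ (hf k₀ (hF hk₀)).1, ?_⟩
    intro a ha
    have := (hf a (hF ha)).2
    exact hTmono (F.le_sup' f ha) this
  -- key induction
  have hkey : ∀ i, AA (TT i) ≤ ⨆ j ∈ Set.Iic i, CC j := by
    intro i
    induction i using WellFoundedLT.induction with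
    | _ i IH =>
      have hdec := AT_le_AS_sup_C (S := SS i) (T := TT i) hπ (hScl i) (hTcl i) (hST i)
      intro x hx
      rcases Submodule.mem_sup.1 (hdec hx) with ⟨a, ha, c, hc, rfl⟩
      refine Submodule.add_mem _ ?_ ?_
      · -- a ∈ AA (SS i)
        obtain ⟨u, hu, rfl⟩ := ha
        rcases u.support.eq_empty_or_nonempty with h0 | hne
        · have : u = 0 := Finsupp.support_eq_empty.1 h0
          rw [this, map_zero]
          exact Submodule.zero_mem _
        · obtain ⟨j, hj, hFj⟩ := hfin i u.support hne (Finsupp.mem_supported V u |>.1 hu)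
          have haj : π u ∈ AA (TT j) := ⟨u, (Finsupp.mem_supported V u).2 hFj, rfl⟩
          have h1 := IH j hj haj
          refine (biSup_mono ?_ : (⨆ k ∈ Set.Iic j, CC k) ≤ _) h1
          intro k hk
          exact le_trans hk (le_of_lt hj)
      · exact le_biSup CC (Set.mem_Iic.2 le_rfl) hc
  -- exhaustion
  have hsup : (⨆ j, CC j) = LinearMap.range π := by
    apply le_antisymm
    · exact iSup_le hCleR
    · rintro _ ⟨z, rfl⟩
      set x := π z with hx
      rcases x.support.eq_empty_or_nonempty with h0 | hne
      · have : x = 0 := Finsupp.support_eq_empty.1 h0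
        rw [this]
        exact Submodule.zero_mem _
      · set i := x.support.max' hne with hi
        have hsub : ↑x.support ⊆ TT i := by
          intro a ha
          exact subset_clS π _ (x.support.le_max' a ha)
        have hmem : x ∈ AA (TT i) :=
          ⟨x, (Finsupp.mem_supported V x).2 hsub, pi_pi hπ z⟩
        have := hkey i hmem
        refine le_trans (biSup_mono (fun k _ => trivial) : (⨆ j ∈ Set.Iic i, CC j) ≤ _) ?_ this
        intro y hy
        simpa using hy
  -- independence
  have hind : iSupIndep CC := by
    intro i
    rw [Submodule.disjoint_def]
    intro x hxC hxS
    obtain ⟨s, hs⟩ := (Submodule.mem_iSup_iff_exists_finset).1 hxS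
    clear hxS
    induction s using Finset.strongInduction generalizing x with
    | _ s IH =>
      rcases s.eq_empty_or_nonempty with rfl | hne
      · simpa using hs
      · set m := s.max' hne with hm
        have hsub_bound : ∀ j, j < m → (⨆ (_ : j ≠ i), CC j) ≤ AA (SS m) := by
          intro j hj
          refine iSup_le fun _ => ?_
          exact le_trans (hCleAT j) (hAAmono (hTS hj))
        by_cases hmi : m ≤ i
        · -- all indices ≤ i hence < i (or = i with empty sup)
          have hbound : ∀ j ∈ s, (⨆ (_ : j ≠ i), CC j) ≤ AA (SS i) := by
            intro j hjs
            by_cases hji : j = i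
            · subst hji
              exact iSup_le fun h => absurd rfl h
            · have hj : j < i := lt_of_le_of_ne (le_trans (s.le_max' j hjs) hmi) hji
              refine iSup_le fun _ => ?_
              exact le_trans (hCleAT j) (hAAmono (hTS hj))
          have hxA : x ∈ AA (SS i) := by
            have : (⨆ j ∈ s, ⨆ (_ : j ≠ i), CC j) ≤ AA (SS i) := iSup₂_le hbound
            exact this hs
          exact (Submodule.disjoint_def.1
            (disjoint_AS_C hπ (hScl i) (hTcl i) (hST i))) x hxA hxC
        · -- m > i : split off the m-component
          push_neg at hmi
          have hmim : i < m := hmi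
          have hinsert : s = insert m (s.erase m) := (Finset.insert_erase (s.max'_mem hne)).symm
          rw [hinsert, Finset.iSup_insert] at hs
          rcases Submodule.mem_sup.1 hs with ⟨c, hc, y, hy, rfl⟩
          have hyA : y ∈ AA (SS m) := by
            have : (⨆ j ∈ s.erase m, ⨆ (_ : j ≠ i), CC j) ≤ AA (SS m) := by
              refine iSup₂_le fun j hj => ?_
              have hjm : j < m :=
                lt_of_le_of_ne (s.le_max' j (Finset.mem_of_mem_erase hj))
                  (Finset.ne_of_mem_erase hj)
              exact hsub_bound j hjm
            exact this hy
          have hxA : c + y ∈ AA (SS m) := by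
            have hx1 : c + y ∈ AA (TT i) := hCleAT i hxC
            exact hAAmono (hTS hmim) hx1
          have hcA : c ∈ AA (SS m) := by
            have : c = (c + y) - y := by abel
            rw [this]
            exact Submodule.sub_mem _ hxA hyA
          have hc0 : c = 0 := by
            have hcC : c ∈ CC m := (iSup_le fun _ => le_rfl : (⨆ (_ : m ≠ i), CC m) ≤ CC m) hc
            exact (Submodule.disjoint_def.1
              (disjoint_AS_C hπ (hScl m) (hTcl m) (hST m))) c hcA hcC
          rw [hc0, zero_add] at hxC ⊢
          exact IH (s.erase m) (Finset.erase_ssubset (s.max'_mem hne)) y hxC hy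
  -- conclude via the internal direct sum
  haveI : ∀ i, Module.Free V ↥(CC i) := hCfree
  set Ψ : (Π₀ i, ↥(CC i)) →ₗ[V] (ι →₀ V) := DFinsupp.lsum ℕ (fun i => (CC i).subtype) with hΨ
  have hinj : Function.Injective Ψ := hind.dfinsupp_lsum_injective
  have hrange : LinearMap.range Ψ = LinearMap.range π := by
    rw [hΨ, ← Submodule.iSup_eq_range_dfinsupp_lsum, hsup]
  exact Module.Free.of_equiv
    ((LinearEquiv.ofInjective Ψ hinj).symm.symm.trans (LinearEquiv.ofEq _ _ hrange))

/-- Kaplansky: projective modules over a valuation domain are free. -/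
theorem free_of_projective (M : Type*) [AddCommGroup M] [Module V M]
    (h : Module.Projective V M) : Module.Free V M := by
  obtain ⟨s, hs⟩ := (Module.projective_def).1 h
  set t : (M →₀ V) →ₗ[V] M := Finsupp.linearCombination V (id : M → M) with ht
  set π : (M →₀ V) →ₗ[V] (M →₀ V) := s ∘ₗ t with hπdef
  have hπ : π ∘ₗ π = π := by
    apply LinearMap.ext; intro z
    simp only [hπdef, LinearMap.comp_apply]
    rw [hs (t z)]
  have hrange : LinearMap.range π = LinearMap.range s := by
    apply le_antisymm
    · rintro _ ⟨z, rfl⟩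
      exact ⟨t z, rfl⟩
    · rintro _ ⟨m, rfl⟩
      exact ⟨s m, by simp only [hπdef, LinearMap.comp_apply]; rw [hs m]⟩
  haveI : Module.Free V ↥(LinearMap.range π) := free_range_idem π hπ
  have hinj : Function.Injective s := Function.LeftInverse.injective hs
  haveI : Module.Free V ↥(LinearMap.range s) :=
    Module.Free.of_equiv (LinearEquiv.ofEq _ _ hrange)
  exact Module.Free.of_equiv (LinearEquiv.ofInjective s hinj).symm


section Schanuel

variable {F : Type v} [AddCommGroup F] [Module V F] [Module.Free V F]

/-- Schanuel-type argument: if `pd (F/H) ≤ 1` with `F` free (hence projective),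
then `H` is projective. -/
theorem projective_of_pdLeOne (H : Submodule V F) (h : PdLeOne V (F ⧸ H)) :
    Module.Projective V ↥H := by
  obtain ⟨P, _, _, f, hP, hfsurj, hK⟩ := h
  haveI := hP
  haveI := hK
  set K := LinearMap.ker f with hKdef
  -- lift the quotient map through f
  obtain ⟨g, hg⟩ := Module.projective_lifting_property f H.mkQ hfsurj
  have hgapp : ∀ x : F, f (g x) = H.mkQ x := fun x => by
    have := congrArg (fun φ => φ x) (congrArg DFunLike.coe hg); simpa using this
  -- the combined surjection Φ : F × K → P
  set Φm : F × ↥K →ₗ[V] P :=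
    (g ∘ₗ LinearMap.fst V F ↥K) + (K.subtype ∘ₗ LinearMap.snd V F ↥K) with hΦm
  have hΦapp : ∀ (x : F) (k : ↥K), Φm (x, k) = g x + (k : P) := fun x k => rfl
  have hΦsurj : Function.Surjective Φm := by
    intro p
    obtain ⟨x, hx⟩ := H.mkQ_surjective (f p)
    have hk : p - g x ∈ K := by
      rw [hKdef, LinearMap.mem_ker, map_sub, hgapp, hx, sub_self]
    exact ⟨(x, ⟨p - g x, hk⟩), by rw [hΦapp]; simp⟩
  -- split the surjection
  obtain ⟨σ, hσ⟩ := Module.projective_lifting_property Φm (LinearMap.id : P →ₗ[V] P) hΦsurj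
  have hσapp : ∀ p : P, Φm (σ p) = p := fun p => by
    have := congrArg (fun φ => φ p) (congrArg DFunLike.coe hσ); simpa using this
  -- the embedding of H
  have hmemK : ∀ h : ↥H, -(g (h : F)) ∈ K := by
    intro hh
    rw [hKdef, LinearMap.mem_ker, map_neg, hgapp, neg_eq_zero]
    exact (Submodule.Quotient.mk_eq_zero H).2 hh.2
  set iH : ↥H →ₗ[V] F × ↥K :=
    LinearMap.prod H.subtype
      (LinearMap.codRestrict K (-(g ∘ₗ H.subtype)) (fun c => hmemK c)) with hiH
  have hiHapp : ∀ h : ↥H, iH h = ((h : F), ⟨-(g (h : F)), hmemK h⟩) := fun h => rfl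
  -- the retraction
  set r0 : F × ↥K →ₗ[V] F × ↥K := LinearMap.id - σ ∘ₗ Φm with hr0
  have hr0H : ∀ z : F × ↥K, (r0 z).1 ∈ H := by
    intro z
    have hΦr0 : Φm (r0 z) = 0 := by
      simp only [hr0, LinearMap.sub_apply, LinearMap.id_apply, LinearMap.comp_apply, map_sub,
        hσapp, sub_self]
    have : g (r0 z).1 + ((r0 z).2 : P) = 0 := by
      rw [← hΦapp (r0 z).1 (r0 z).2]
      exact hΦr0
    have hf0 : f (g (r0 z).1) = 0 := by
      have h2 : f (g (r0 z).1) + f ((r0 z).2 : P) = 0 := by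
        rw [← map_add, this, map_zero]
      have h3 : f ((r0 z).2 : P) = 0 := (r0 z).2.2
      rw [h3, add_zero] at h2
      exact h2
    rw [hgapp] at hf0
    exact (Submodule.Quotient.mk_eq_zero H).1 hf0
  set sH : F × ↥K →ₗ[V] ↥H :=
    LinearMap.codRestrict H (LinearMap.fst V F ↥K ∘ₗ r0) hr0H with hsH
  have hsplit : sH ∘ₗ iH = LinearMap.id := by
    apply LinearMap.ext; intro h
    have hΦiH : Φm (iH h) = 0 := by
      rw [hiHapp, hΦapp]
      simp
    have hr0iH : r0 (iH h) = iH h := by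
      simp only [hr0, LinearMap.sub_apply, LinearMap.id_apply, LinearMap.comp_apply, hΦiH,
        map_zero, sub_zero]
    apply Subtype.ext
    show (r0 (iH h)).1 = (h : F)
    rw [hr0iH, hiHapp]
  exact Module.Projective.of_split iH sH hsplit

/-- easy direction : if `H` is free then `pd (F/H) ≤ 1`. -/
theorem pdLeOne_of_free (H : Submodule V F) (hfree : Module.Free V ↥H) :
    PdLeOne V (F ⧸ H) := by
  set κ := Module.Free.ChooseBasisIndex V F with hκ
  set b : Module.Basis κ V F := Module.Free.chooseBasis V F with hb
  set e : (κ →₀ V) ≃ₗ[V] F := b.repr.symm with he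
  set eL : (κ →₀ V) →ₗ[V] F := (e : (κ →₀ V) →ₗ[V] F) with heL
  refine ⟨κ →₀ V, inferInstance, inferInstance, H.mkQ ∘ₗ eL,
    inferInstance, ?_, ?_⟩
  · exact H.mkQ_surjective.comp e.surjective
  · have hker : LinearMap.ker (H.mkQ ∘ₗ eL) = H.comap eL := by
      ext z
      simp [Submodule.mem_comap]
    haveI : Module.Free V ↥(H.comap eL) := by
      refine Module.Free.of_equiv (?_ : ↥H ≃ₗ[V] ↥(H.comap eL))
      refine LinearEquiv.ofBijective
        (LinearMap.codRestrict (H.comap eL)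
          ((e.symm : F →ₗ[V] (κ →₀ V)) ∘ₗ H.subtype) ?_) ⟨?_, ?_⟩
      · intro c
        simp [Submodule.mem_comap, heL]
      · intro a b hab
        apply Subtype.ext
        have := congrArg (Subtype.val) hab
        change e.symm (a : F) = e.symm (b : F) at this
        exact e.symm.injective (by simpa using this)
      · rintro ⟨z, hz⟩
        refine ⟨⟨e z, by simpa [Submodule.mem_comap, heL] using hz⟩, ?_⟩
        apply Subtype.ext
        change e.symm (e z) = z
        simp
    rw [hker]
    infer_instance

end Schanuel

theorem statement9' (F : Type v) [AddCommGroup F] [Module V F] [Module.Free V F]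
    (H : Submodule V F) :
    (PdLeOne V (F ⧸ H) ↔ Module.Free V ↥H) ∧ (Tight V H ↔ Module.Free V ↥H) := by
  have key : PdLeOne V (F ⧸ H) ↔ Module.Free V ↥H :=
    ⟨fun h => free_of_projective ↥H (projective_of_pdLeOne H h),
     fun h => pdLeOne_of_free H h⟩
  exact ⟨key, key⟩


end S9

/-- for a free module F over a valuation domain and a submodule H,
p.d.(F/H) ≤ 1 iff H is free; i.e., the tight submodules of free modules are exactly
the free submodules. -/
theorem statement9 (V : Type u) [CommRing V] [IsDomain V] [ValuationRing V]
    (F : Type v) [AddCommGroup F] [Module V F] [Module.Free V F]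
    (H : Submodule V F) :
    (PdLeOne V (F ⧸ H) ↔ Module.Free V ↥H) ∧ (Tight V H ↔ Module.Free V ↥H) := by
  exact S9.statement9' F H
end

section
/- Let V be a valuation domain and M a V-module with pd M ≤ 1. Then for every element a ∈ M, the annihilator ann_M(a) = { r ∈ V : r·a = 0 } is a principal ideal of V. -/
universe u v

open Pointwise

/-- In a valuation ring, any nonempty finite set has an element dividing all others. -/
lemma exists_dvd_all_finset {V : Type u} [CommRing V] [IsDomain V] [ValuationRing V] :
    ∀ s : Finset V, s.Nonempty → ∃ a ∈ s, ∀ b ∈ s, a ∣ b := by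
  classical
  intro s
  induction s using Finset.induction with
  | empty => simp
  | @insert x t hx ih =>
    intro _
    rcases t.eq_empty_or_nonempty with rfl | ht
    · exact ⟨x, by simp⟩
    · obtain ⟨a, ha, hall⟩ := ih ht
      rcases ValuationRing.dvd_total x a with h | h
      · refine ⟨x, Finset.mem_insert_self _ _, fun b hb => ?_⟩
        rcases Finset.mem_insert.1 hb with rfl | hb
        · exact dvd_rfl
        · exact h.trans (hall b hb)
      · refine ⟨a, Finset.mem_insert_of_mem ha, fun b hb => ?_⟩
        rcases Finset.mem_insert.1 hb with rfl | hb
        · exact h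
        · exact hall b hb

/-- annihilators of elements of modules of p.d. ≤ 1 over a valuation
domain are principal ideals. -/
theorem statement10 (V : Type u) [CommRing V] [IsDomain V] [ValuationRing V]
    (M : Type v) [AddCommGroup M] [Module V M] (hM : PdLeOne V M) (a : M) :
    ∃ s : V, (LinearMap.ker (LinearMap.toSpanSingleton V M a) : Ideal V)
      = Ideal.span {s} := by
  classical
  set I : Ideal V := LinearMap.ker (LinearMap.toSpanSingleton V M a) with hIdef
  have hmemI : ∀ r : V, r ∈ I ↔ r • a = 0 := by
    intro r
    simp [hIdef, LinearMap.mem_ker, LinearMap.toSpanSingleton_apply]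
  by_cases ha : a = 0
  · refine ⟨1, ?_⟩
    rw [Ideal.span_singleton_one]
    ext r
    simp [hmemI, ha]
  by_cases hI : I = ⊥
  · exact ⟨0, by rw [hI]; exact (Ideal.span_singleton_eq_bot.mpr rfl).symm⟩
  obtain ⟨r₀, hr₀I, hr₀⟩ := Submodule.exists_mem_ne_zero_of_ne_bot hI
  obtain ⟨P, _, _, f, hP, hfs, hK⟩ := hM
  obtain ⟨x, hx⟩ := hfs a
  -- P is torsion-free
  have htf : ∀ (r : V) (p : P), r ≠ 0 → r • p = 0 → p = 0 := by
    obtain ⟨sP, hsP⟩ := (Module.projective_def).mp hP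
    intro r p hr hrp
    have h1 : r • sP p = 0 := by rw [← map_smul, hrp, map_zero]
    have h2 : sP p = 0 := by
      ext z
      have h3 := DFunLike.congr_fun h1 z
      simp only [Finsupp.smul_apply, smul_eq_mul, Finsupp.coe_zero, Pi.zero_apply] at h3 ⊢
      exact (mul_eq_zero.mp h3).resolve_left hr
    have h4 := hsP p
    rw [h2, map_zero] at h4
    exact h4.symm
  set K := LinearMap.ker f with hKdef
  obtain ⟨sK, hsK⟩ := (Module.projective_def).mp hK
  have hxK : ∀ r ∈ I, r • x ∈ K := by
    intro r hr
    simp only [hKdef, LinearMap.mem_ker, map_smul, hx]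
    exact (hmemI r).mp hr
  have hxne : x ≠ 0 := fun h => ha (by rw [← hx, h, map_zero])
  set k : K := ⟨r₀ • x, hxK r₀ hr₀I⟩ with hkdef
  have hkne : k ≠ 0 := by
    intro h
    apply hxne
    apply htf r₀ x hr₀
    simpa [hkdef, Submodule.mk_eq_zero] using h
  set c : K →₀ V := sK k with hcdef
  have hcne : c ≠ 0 := by
    intro h
    apply hkne
    have := hsK k
    rw [← hcdef] at this
    rw [h, map_zero] at this
    exact this.symm
  obtain ⟨a₀, ha₀mem, hdvd⟩ := exists_dvd_all_finset (c.support.image c)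
    ((Finset.image_nonempty).mpr (Finsupp.support_nonempty_iff.mpr hcne))
  obtain ⟨z₀, hz₀, ha₀⟩ := Finset.mem_image.mp ha₀mem
  have ha₀ne : a₀ ≠ 0 := by rw [← ha₀]; exact Finsupp.mem_support_iff.mp hz₀
  -- key divisibility relation
  have key : ∀ r ∈ I, ∃ u : V, r * a₀ = r₀ * u := by
    intro r hr
    have heq : r₀ • (⟨r • x, hxK r hr⟩ : K) = r • k := by
      apply Subtype.ext
      show r₀ • (r • x) = r • (r₀ • x)
      rw [smul_comm]
    have h2 := congrArg sK heq
    rw [map_smul, map_smul, ← hcdef] at h2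
    have h3 := DFunLike.congr_fun h2 z₀
    simp only [Finsupp.smul_apply, smul_eq_mul] at h3
    exact ⟨_, by rw [← ha₀]; exact h3.symm⟩
  -- write k = a₀ • k'
  have hdvd' : ∀ z, a₀ ∣ c z := by
    intro z
    by_cases hz : z ∈ c.support
    · exact hdvd _ (Finset.mem_image_of_mem c hz)
    · rw [Finsupp.notMem_support_iff.mp hz]; exact dvd_zero _
  set g : K → V := fun z => (hdvd' z).choose with hgdef
  have hg : ∀ z, c z = a₀ * g z := fun z => (hdvd' z).choose_spec
  set k' : K := ∑ z ∈ c.support, g z • z with hk'def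
  have hksum : k = ∑ z ∈ c.support, c z • z := by
    conv_lhs => rw [← hsK k, ← hcdef]
    rw [Finsupp.linearCombination_apply, Finsupp.sum]
    rfl
  have hak' : a₀ • k' = k := by
    rw [hk'def, Finset.smul_sum, hksum]
    exact Finset.sum_congr rfl fun z _ => by rw [smul_smul, ← hg]
  -- in P:
  have hmain : r₀ • x = a₀ • (k' : P) := by
    have := congrArg (Subtype.val) hak'
    simpa [hkdef] using this.symm
  rcases ValuationRing.dvd_total r₀ a₀ with ⟨u, hu⟩ | ⟨t, ht⟩
  · -- r₀ ∣ a₀ : contradiction with a ≠ 0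
    exfalso
    have : r₀ • (x - u • (k' : P)) = 0 := by
      rw [smul_sub, hmain, hu, mul_comm, mul_smul, smul_comm, sub_self]
    have hxk := htf r₀ _ hr₀ this
    have hxeq : x = u • (k' : P) := by rwa [sub_eq_zero] at hxk
    apply ha
    rw [← hx, hxeq, map_smul]
    have : f (k' : P) = 0 := k'.2
    rw [this, smul_zero]
  · -- a₀ ∣ r₀ : I = span {t}
    refine ⟨t, ?_⟩
    have htI : t ∈ I := by
      rw [hmemI]
      have h0 : a₀ • (t • x - (k' : P)) = 0 := by
        rw [smul_sub, smul_smul, ← ht, hmain, sub_self]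
      have htx : t • x = (k' : P) := by
        have := htf a₀ _ ha₀ne h0
        rwa [sub_eq_zero] at this
      have : f (t • x) = 0 := by rw [htx]; exact k'.2
      rwa [map_smul, hx] at this
    apply le_antisymm
    · intro r hr
      obtain ⟨u, hu⟩ := key r hr
      rw [Ideal.mem_span_singleton]
      refine ⟨u, ?_⟩
      apply mul_left_cancel₀ ha₀ne
      rw [mul_comm a₀ r, hu, ht]
      ring
    · rw [Ideal.span_singleton_le_iff_mem]
      exact htI
end

section
/- Let V be a valuation domain and M a V-module with pd M ≤ 1. Then there exist a divisible V-module D with pd D ≤ 1 and an injective V-linear map ι : M → D whose image is tight in D, i.e., pd(D/ι(M)) ≤ 1. -/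
universe u v

open Pointwise

/-- `D` is a divisible module. -/
def Divisible (V : Type u) [CommRing V] (D : Type*) [AddCommGroup D]
    [Module V D] : Prop :=
  ∀ r : V, r ≠ 0 → ∀ d : D, ∃ e : D, r • e = d

namespace Statement15Aux

open Finsupp Submodule LinearMap Function

variable (V : Type u) [CommRing V] [IsDomain V]

/-- Lists of nonzero ring elements. -/
abbrev Lst := List {r : V // r ≠ 0}

variable (I : Type*)

/-- Generators of the Fuchs-type module built over the index type `I`. -/
abbrev Gen := I × Lst V

/-- Index type of the relations. -/
abbrev Rel := I × {r : V // r ≠ 0} × Lst V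

/-- The big free module. -/
abbrev F0 := Gen V I →₀ V

/-- The relation `r • x_{(i, r::l)} - x_{(i,l)}`. -/
noncomputable def w (p : Rel V I) : F0 V I :=
  Finsupp.single (p.1, p.2.1 :: p.2.2) (p.2.1 : V) - Finsupp.single (p.1, p.2.2) 1

/-- The relations together with the "base" generators `x_{(i, [])}`. -/
noncomputable def gFam : (Rel V I ⊕ I) → F0 V I :=
  Sum.elim (w V I) fun i => Finsupp.single (i, ([] : Lst V)) 1

/-- An auxiliary family of vectors in a vector space over the fraction field, used to
prove the linear independence of `gFam`. -/
noncomputable def t (i : I) : Lst V → ((Rel V I ⊕ I) →₀ FractionRing V)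
  | [] => Finsupp.single (Sum.inr i) 1
  | r :: l => (algebraMap V (FractionRing V) r)⁻¹ •
      (Finsupp.single (Sum.inl (i, r, l)) 1 + t i l)

/-- The linear map witnessing the independence of `gFam`. -/
noncomputable def T : F0 V I →ₗ[V] ((Rel V I ⊕ I) →₀ FractionRing V) :=
  Finsupp.linearCombination V fun p : Gen V I => t V I p.1 p.2

lemma T_single (p : Gen V I) (a : V) :
    T V I (Finsupp.single p a) = a • t V I p.1 p.2 := by
  simp [T]

lemma algebraMap_ne_zero {r : V} (hr : r ≠ 0) :
    algebraMap V (FractionRing V) r ≠ 0 := by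
  simpa using fun h => hr (IsFractionRing.injective V (FractionRing V) (by simpa using h))

lemma T_gFam (j : Rel V I ⊕ I) :
    T V I (gFam V I j) = Finsupp.single j (1 : FractionRing V) := by
  cases j with
  | inl p =>
    obtain ⟨i, r, l⟩ := p
    have h1 : T V I (gFam V I (Sum.inl (i, r, l)))
        = (r : V) • t V I i (r :: l) - t V I i l := by
      simp [gFam, w, T_single, map_sub]
    rw [h1]
    have hr : algebraMap V (FractionRing V) (r : V) ≠ 0 := algebraMap_ne_zero V r.2
    have h2 : ((r : V)) • ((algebraMap V (FractionRing V) (r : V))⁻¹ •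
        (Finsupp.single (Sum.inl (i, r, l)) (1 : FractionRing V) + t V I i l))
        = Finsupp.single (Sum.inl (i, r, l)) (1 : FractionRing V) + t V I i l := by
      rw [← algebraMap_smul (FractionRing V) ((r : V))
        ((algebraMap V (FractionRing V) (r : V))⁻¹ •
          (Finsupp.single (Sum.inl (i, r, l)) (1 : FractionRing V) + t V I i l)),
        smul_smul, mul_inv_cancel₀ hr, one_smul]
    show ((r : V)) • t V I i (r :: l) - t V I i l = _
    rw [show t V I i (r :: l) = (algebraMap V (FractionRing V) (r : V))⁻¹ •
        (Finsupp.single (Sum.inl (i, r, l)) 1 + t V I i l) from rfl, h2]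
    abel
  | inr i =>
    simp [gFam, T_single]
    rfl

lemma indep_single :
    LinearIndependent V (fun j : Rel V I ⊕ I => Finsupp.single j (1 : FractionRing V)) := by
  have hK : LinearIndependent (FractionRing V)
      (fun j : Rel V I ⊕ I => Finsupp.single j (1 : FractionRing V)) := by
    simpa [Finsupp.coe_basisSingleOne] using
      (Finsupp.basisSingleOne (R := FractionRing V) (ι := Rel V I ⊕ I)).linearIndependent
  refine hK.restrict_scalars ?_
  intro a b h
  apply IsFractionRing.injective V (FractionRing V)
  simpa [Algebra.smul_def] using h

lemma indep_gFam : LinearIndependent V (gFam V I) := by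
  apply LinearIndependent.of_comp (T V I)
  have : (T V I) ∘ gFam V I = fun j : Rel V I ⊕ I => Finsupp.single j (1 : FractionRing V) :=
    funext fun j => T_gFam V I j
  rw [this]
  exact indep_single V I

lemma indep_w : LinearIndependent V (w V I) := by
  have := (indep_gFam V I).comp Sum.inl Sum.inl_injective
  simpa [gFam, Function.comp_def] using this

/-- The relation submodule. -/
noncomputable def H : Submodule V (F0 V I) := Submodule.span V (Set.range (w V I))

lemma projective_H : Module.Projective V (H V I) :=
  Module.Projective.of_basis (Module.Basis.span (indep_w V I))

/-- The Fuchs-type divisible module over the index type `I`. -/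
abbrev D0 := F0 V I ⧸ H V I

lemma divisible_D0 : Divisible V (D0 V I) := by
  intro r hr d
  obtain ⟨x, rfl⟩ := (H V I).mkQ_surjective d
  set rr : {s : V // s ≠ 0} := ⟨r, hr⟩
  let dv : F0 V I →ₗ[V] F0 V I :=
    Finsupp.lmapDomain V V (fun p : Gen V I => (p.1, rr :: p.2))
  refine ⟨(H V I).mkQ (dv x), ?_⟩
  have key : (r • ((H V I).mkQ ∘ₗ dv)) = (H V I).mkQ := by
    apply Finsupp.lhom_ext
    rintro ⟨i, l⟩ a
    have h1 : dv (Finsupp.single (i, l) a) = Finsupp.single (i, rr :: l) a := by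
      simp [dv, Finsupp.lmapDomain_apply, Finsupp.mapDomain_single]
    have h2 : r • Finsupp.single (i, rr :: l) a - Finsupp.single (i, l) a
        = a • w V I (i, rr, l) := by
      show _ = a • (Finsupp.single (i, rr :: l) ((rr : V)) - Finsupp.single (i, l) 1)
      rw [smul_sub, Finsupp.smul_single, Finsupp.smul_single, Finsupp.smul_single,
        smul_eq_mul, smul_eq_mul, smul_eq_mul, mul_one]
      show Finsupp.single _ (r * a) - _ = Finsupp.single _ (a * r) - _
      rw [mul_comm]
    have hmem : r • Finsupp.single (i, rr :: l) a - Finsupp.single (i, l) a ∈ H V I := by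
      rw [h2]
      exact Submodule.smul_mem _ a (Submodule.subset_span ⟨(i, rr, l), rfl⟩)
    have hmk : (H V I).mkQ (r • Finsupp.single (i, rr :: l) a)
        = (H V I).mkQ (Finsupp.single (i, l) a) := by
      rw [← sub_eq_zero, ← map_sub, Submodule.mkQ_apply, Submodule.Quotient.mk_eq_zero]
      exact hmem
    calc (r • ((H V I).mkQ ∘ₗ dv)) (Finsupp.single (i, l) a)
        = r • (H V I).mkQ (dv (Finsupp.single (i, l) a)) := rfl
      _ = (H V I).mkQ (r • Finsupp.single (i, rr :: l) a) := by rw [h1, map_smul]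
      _ = (H V I).mkQ (Finsupp.single (i, l) a) := hmk
  have := DFunLike.congr_fun key x
  simpa [map_smul] using this

lemma divisible_quot (N : Submodule V (D0 V I)) : Divisible V (D0 V I ⧸ N) := by
  intro r hr d
  obtain ⟨x, rfl⟩ := N.mkQ_surjective d
  obtain ⟨e, he⟩ := divisible_D0 V I r hr x
  exact ⟨N.mkQ e, by rw [← map_smul, he]⟩

/-- The canonical embedding of the free module on `I` into `D0`. -/
noncomputable def e0 : (I →₀ V) →ₗ[V] F0 V I :=
  Finsupp.lmapDomain V V (fun i => (i, ([] : Lst V)))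

noncomputable def emb : (I →₀ V) →ₗ[V] D0 V I := (H V I).mkQ ∘ₗ e0 V I

lemma emb_injective : Function.Injective (emb V I) := by
  rw [← LinearMap.ker_eq_bot, LinearMap.ker_eq_bot']
  intro x hx
  have hxH : e0 V I x ∈ H V I := by
    simpa [emb, Submodule.Quotient.mk_eq_zero] using hx
  have hx2 : e0 V I x ∈ Submodule.span V (gFam V I '' Set.range Sum.inr) := by
    have himg : gFam V I '' Set.range Sum.inr
        = Set.range (fun i : I => Finsupp.single (i, ([] : Lst V)) (1 : V)) := by
      rw [← Set.range_comp]; rfl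
    rw [himg]
    clear hx hxH
    induction x using Finsupp.induction_linear with
    | zero => simp
    | add a b ha hb => rw [map_add]; exact Submodule.add_mem _ ha hb
    | single i a =>
      have : e0 V I (Finsupp.single i a) = Finsupp.single (i, ([] : Lst V)) a := by
        simp [e0, Finsupp.lmapDomain_apply, Finsupp.mapDomain_single]
      rw [this, show Finsupp.single (i, ([] : Lst V)) a
        = a • Finsupp.single (i, ([] : Lst V)) (1 : V) by simp [Finsupp.smul_single]]
      exact Submodule.smul_mem _ a (Submodule.subset_span ⟨i, rfl⟩)
  have hx1 : e0 V I x ∈ Submodule.span V (gFam V I '' Set.range Sum.inl) := by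
    have himg : gFam V I '' Set.range Sum.inl = Set.range (w V I) := by
      rw [← Set.range_comp]; rfl
    rw [himg]; exact hxH
  have hdisj := (indep_gFam V I).disjoint_span_image
    (s := Set.range Sum.inl) (t := Set.range Sum.inr)
    Set.isCompl_range_inl_range_inr.disjoint
  have hzero : e0 V I x = 0 := by
    have := hdisj.le_bot ⟨hx1, hx2⟩
    simpa using this
  have hinj : Function.Injective (fun i : I => (i, ([] : Lst V))) := by
    intro a b h
    exact (Prod.mk.injEq _ _ _ _).mp h |>.1
  have : e0 V I x = e0 V I 0 := by simpa using hzero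
  exact Finsupp.mapDomain_injective hinj this

/-- Pull back a projective submodule along a surjection with projective kernel. -/
theorem projective_comap {A : Type*} {B : Type*} [AddCommGroup A] [Module V A]
    [AddCommGroup B] [Module V B] (q : A →ₗ[V] B) (hq : Function.Surjective q)
    (hker : Module.Projective V (LinearMap.ker q)) (N : Submodule V B)
    (hN : Module.Projective V N) : Module.Projective V (N.comap q) := by
  have hmap : ∀ x ∈ N.comap q, q x ∈ N := fun x hx => hx
  let π : N.comap q →ₗ[V] N := q.restrict hmap
  have hπ : Function.Surjective π := by
    rintro ⟨n, hn⟩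
    obtain ⟨a, rfl⟩ := hq n
    exact ⟨⟨a, hn⟩, rfl⟩
  obtain ⟨σ, hσ⟩ := Module.projective_lifting_property π LinearMap.id hπ
  have hle : LinearMap.ker q ≤ N.comap q := by
    intro x hx
    simp only [Submodule.mem_comap, LinearMap.mem_ker.mp hx]
    exact N.zero_mem
  have hkerπ : Module.Projective V (LinearMap.ker π) := by
    have h1 : LinearMap.ker π = (LinearMap.ker q).comap (N.comap q).subtype :=
      LinearMap.ker_restrict hmap
    have e : (LinearMap.ker π) ≃ₗ[V] LinearMap.ker q := by
      rw [h1]; exact Submodule.comapSubtypeEquivOfLe hle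
    exact Module.Projective.of_equiv e.symm
  -- split the extension `0 → ker π → N.comap q → N → 0`
  haveI := hkerπ
  haveI := hN
  let i : (N.comap q) →ₗ[V] (LinearMap.ker π × N) :=
    LinearMap.prod
      ((LinearMap.id - σ ∘ₗ π).codRestrict (LinearMap.ker π) (by
        intro x
        have := DFunLike.congr_fun hσ (π x)
        simp only [LinearMap.mem_ker, LinearMap.sub_apply, LinearMap.id_apply,
          LinearMap.coe_comp, Function.comp_apply, map_sub]
        simp only [LinearMap.coe_comp, Function.comp_apply, LinearMap.id_apply] at this
        rw [this, sub_self]))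
      π
  let s : (LinearMap.ker π × N) →ₗ[V] (N.comap q) :=
    LinearMap.coprod (LinearMap.ker π).subtype σ
  have hsplit : s ∘ₗ i = LinearMap.id := by
    ext x
    simp [s, i, LinearMap.coprod_apply, sub_add_cancel]
  exact Module.Projective.of_split i s hsplit

lemma pdLeOne_quot (N : Submodule V (D0 V I)) (hN : Module.Projective V N) :
    PdLeOne V (D0 V I ⧸ N) := by
  refine ⟨F0 V I, inferInstance, inferInstance, N.mkQ ∘ₗ (H V I).mkQ, inferInstance, ?_, ?_⟩
  · rw [LinearMap.coe_comp]
    exact N.mkQ_surjective.comp (H V I).mkQ_surjective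
  · rw [LinearMap.ker_comp, Submodule.ker_mkQ]
    refine projective_comap V _ (H V I).mkQ_surjective ?_ N hN
    have h := projective_H V I
    rwa [show LinearMap.ker (H V I).mkQ = H V I from Submodule.ker_mkQ _]

universe w in
theorem pdLeOne_equiv {X Y : Type w} [AddCommGroup X] [Module V X] [AddCommGroup Y]
    [Module V Y] (e : X ≃ₗ[V] Y) (h : PdLeOne V X) : PdLeOne V Y := by
  obtain ⟨P, i1, i2, f, h1, h2, h3⟩ := h
  refine ⟨P, i1, i2, e.toLinearMap ∘ₗ f, h1, ?_, ?_⟩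
  · rw [LinearMap.coe_comp]
    exact e.surjective.comp h2
  · rwa [LinearMap.ker_comp_of_ker_eq_bot _ e.ker]

end Statement15Aux

open Statement15Aux Submodule LinearMap in
/-- every module of p.d. ≤ 1 embeds tightly into a divisible module
of p.d. ≤ 1. -/
theorem statement15 (V : Type u) [CommRing V] [IsDomain V] [ValuationRing V]
    (M : Type v) [AddCommGroup M] [Module V M] (hM : PdLeOne V M) :
    ∃ (D : Type (max u v)) (_ : AddCommGroup D) (_ : Module V D) (ι : M →ₗ[V] D),
      Divisible V D ∧ PdLeOne V D ∧ Function.Injective ι ∧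
        PdLeOne V (D ⧸ LinearMap.range ι) := by
  obtain ⟨P, _, _, f, hP, hfsurj, hker⟩ := hM
  obtain ⟨s, hs⟩ := Module.projective_def.mp hP
  have hsinj : Function.Injective s := hs.injective
  -- the embedding of `P` into the divisible module `D0 V P`
  let es : P →ₗ[V] D0 V P := emb V P ∘ₗ s
  have hesinj : Function.Injective es := by
    rw [show (es : P → D0 V P) = (emb V P) ∘ s from rfl]
    exact (emb_injective V P).comp hsinj
  let sK : Submodule V (D0 V P) := (LinearMap.ker f).map es
  let sP : Submodule V (D0 V P) := LinearMap.range es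
  have hKP : sK ≤ sP := LinearMap.map_le_range
  have hprojK : Module.Projective V sK :=
    Module.Projective.of_equiv (Submodule.equivMapOfInjective es hesinj (LinearMap.ker f))
  have hprojP : Module.Projective V sP :=
    Module.Projective.of_equiv (LinearEquiv.ofInjective es hesinj)
  refine ⟨D0 V P ⧸ sK, inferInstance, inferInstance, ?_⟩
  let φ : P →ₗ[V] (D0 V P ⧸ sK) := sK.mkQ ∘ₗ es
  have hkerφ : LinearMap.ker φ = LinearMap.ker f := by
    rw [show φ = sK.mkQ ∘ₗ es from rfl, LinearMap.ker_comp, Submodule.ker_mkQ]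
    exact Submodule.comap_map_eq_of_injective hesinj _
  let eq1 : (P ⧸ LinearMap.ker f) ≃ₗ[V] M := f.quotKerEquivOfSurjective hfsurj
  let ι : M →ₗ[V] (D0 V P ⧸ sK) :=
    ((LinearMap.ker f).liftQ φ (le_of_eq hkerφ.symm)) ∘ₗ eq1.symm.toLinearMap
  have hιinj : Function.Injective ι := by
    rw [show (ι : M → D0 V P ⧸ sK)
      = ((LinearMap.ker f).liftQ φ (le_of_eq hkerφ.symm)) ∘ eq1.symm from rfl]
    refine Function.Injective.comp ?_ eq1.symm.injective
    rw [← LinearMap.ker_eq_bot]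
    exact Submodule.ker_liftQ_eq_bot _ _ _ (le_of_eq hkerφ)
  have hrange : LinearMap.range ι = sP.map sK.mkQ := by
    rw [show ι = ((LinearMap.ker f).liftQ φ (le_of_eq hkerφ.symm)) ∘ₗ eq1.symm.toLinearMap
      from rfl, LinearMap.range_comp, LinearEquiv.range, Submodule.map_top,
      Submodule.range_liftQ, show φ = sK.mkQ ∘ₗ es from rfl, LinearMap.range_comp]
  refine ⟨ι, divisible_quot V P sK, pdLeOne_quot V P sK hprojK, hιinj, ?_⟩
  have eq2 : ((D0 V P ⧸ sK) ⧸ sP.map sK.mkQ) ≃ₗ[V] (D0 V P ⧸ sP) :=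
    Submodule.quotientQuotientEquivQuotient sK sP hKP
  have : PdLeOne V ((D0 V P ⧸ sK) ⧸ sP.map sK.mkQ) :=
    pdLeOne_equiv V eq2.symm (pdLeOne_quot V P sP hprojP)
  rw [hrange]
  exact this
end
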